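/- arXiv:1503.00937 — 6 statements merged into one kernel-verified Lean document; each statement's English description precedes it below -/
import Mathlib

section
/- Let n ≥ 3, k ≥ 6, and f ≥ (k-1)n, and suppose the complete k-uniform hypergraph on f vertices is 2-colored red and blue. If there is a red copy of the loose cycle C^k_n and no red copy of the loose cycle C^k_{n-1}, then there is a blue copy of C^k_n. -/
open Finset

/-- Edge `i` (0-indexed) of the `k`-uniform loose cycle with `n` edges, under the embedding `f`
of its canonical vertex set `ZMod (n*(k-1))`. -/
def cycEdge (k n : ℕ) {V : Type} [DecidableEq V] (f : ZMod (n * (k - 1)) → V) (i : ℕ) :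
    Finset V :=
  (Finset.range k).image fun t => f ((i * (k - 1) + t : ℕ) : ZMod (n * (k - 1)))

/-- `f` embeds a loose cycle `C^k_n` all of whose edges satisfy `P`. -/
def IsLooseCycle (k n : ℕ) {V : Type} [DecidableEq V] (P : Finset V → Prop)
    (f : ZMod (n * (k - 1)) → V) : Prop :=
  Function.Injective f ∧ ∀ i < n, P (cycEdge k n f i)

/-- There is a copy of the loose cycle `C^k_n` all of whose edges satisfy `P`. -/
def HasLooseCycle (k n : ℕ) {V : Type} [DecidableEq V] (P : Finset V → Prop) : Prop :=
  ∃ f, IsLooseCycle k n P f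

/-- Edge `i` (0-indexed) of a loose path under the vertex assignment `f`. -/
def pathEdge (k : ℕ) {V : Type} [DecidableEq V] (f : ℕ → V) (i : ℕ) : Finset V :=
  (Finset.range k).image fun t => f (i * (k - 1) + t)

/-- There is a copy of the loose path `P^k_n` all of whose edges satisfy `P`. -/
def HasLoosePath (k n : ℕ) {V : Type} [DecidableEq V] (P : Finset V → Prop) : Prop :=
  ∃ f : ℕ → V, Set.InjOn f (Set.Iic (n * (k - 1))) ∧ ∀ i < n, P (pathEdge k f i)

/-- Every red/blue colouring of `K^k_N` contains a red `C^k_n` or a blue `C^k_m`. -/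
def cycCycArrow (k n m N : ℕ) : Prop :=
  ∀ c : Finset (Fin N) → Bool,
    HasLooseCycle k n (fun e => c e = true) ∨ HasLooseCycle k m (fun e => c e = false)

/-- Every red/blue colouring of `K^k_N` contains a red `P^k_n` or a blue `P^k_m`. -/
def pathPathArrow (k n m N : ℕ) : Prop :=
  ∀ c : Finset (Fin N) → Bool,
    HasLoosePath k n (fun e => c e = true) ∨ HasLoosePath k m (fun e => c e = false)

/-- Every red/blue colouring of `K^k_N` contains a red `P^k_n` or a blue `C^k_m`. -/
def pathCycArrow (k n m N : ℕ) : Prop :=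
  ∀ c : Finset (Fin N) → Bool,
    HasLoosePath k n (fun e => c e = true) ∨ HasLooseCycle k m (fun e => c e = false)

/-- Every red/blue colouring of `K^k_N` contains a red `C^k_n` or a blue `P^k_m`. -/
def cycPathArrow (k n m N : ℕ) : Prop :=
  ∀ c : Finset (Fin N) → Bool,
    HasLooseCycle k n (fun e => c e = true) ∨ HasLoosePath k m (fun e => c e = false)

/-- `r = R(C^k_n, C^k_m)`. -/
def cycCycRamsey (k n m r : ℕ) : Prop := IsLeast {N | cycCycArrow k n m N} r

/-- `r = R(P^k_n, P^k_m)`. -/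
def pathPathRamsey (k n m r : ℕ) : Prop := IsLeast {N | pathPathArrow k n m N} r

/-- `r = R(P^k_n, C^k_m)`. -/
def pathCycRamsey (k n m r : ℕ) : Prop := IsLeast {N | pathCycArrow k n m N} r

/-- `r = R(C^k_n, P^k_m)`. -/
def cycPathRamsey (k n m r : ℕ) : Prop := IsLeast {N | cycPathArrow k n m N} r

namespace BlueAux

def Dfun (n K : ℕ) (r : ℕ) : ℕ :=
  if r = 0 then 3 else if r = 1 then (n-1)*K else if r = 2 then K-2
  else if r = 3 then 2*K-1 else 0

def tau2 (n K i j t : ℕ) : ℕ :=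
  if j = 0 then
    (if t = 0 then (i+(n-1))*K+1 else if t = 1 then (i+1)*K else if t = 2 then (i+1)*K+3
     else i*K+t)
  else if j = 1 then
    (if t = 0 then (i+2)*K+2 else if t = 1 then (i+2)*K
     else if t = 2 then (if n = 3 then i*K else (i+2)*K+1) else (i+2)*K+t)
  else if j = n-2 then
    (if t = 0 then (i+(n-1))*K else if t = 1 then i*K else (i+(n-1))*K+t)
  else (i+1+j)*K+t

def cf2 (n K j t : ℕ) : ℕ :=
  if j = 0 then (if t = 0 then n-1 else if t = 1 then 1 else if t = 2 then 1 else 0)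
  else if j = 1 then (if t = 0 then 2 else if t = 1 then 2
    else if t = 2 then (if n = 3 then 0 else 2) else 2)
  else if j = n-2 then (if t = 0 then n-1 else if t = 1 then 0 else n-1)
  else 1+j

def sf2 (n K j t : ℕ) : ℕ :=
  if j = 0 then (if t = 0 then 1 else if t = 1 then 0 else if t = 2 then 3 else t)
  else if j = 1 then (if t = 0 then 2 else if t = 1 then 0
    else if t = 2 then (if n = 3 then 0 else 1) else t)
  else if j = n-2 then (if t = 0 then 0 else if t = 1 then 0 else t)
  else t

lemma tau2_eq (n K i j t : ℕ) : tau2 n K i j t = (i + cf2 n K j t) * K + sf2 n K j t := by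
  unfold tau2 cf2 sf2
  split_ifs <;> ring

lemma cf2_lt (n K j t : ℕ) (hn : 3 ≤ n) (hj : j ≤ n-2) : cf2 n K j t < n := by
  unfold cf2; split_ifs <;> omega

lemma sf2_lt (n K j t : ℕ) (hK : 5 ≤ K) (ht : t < K) : sf2 n K j t < K := by
  unfold sf2; split_ifs <;> omega

set_option maxHeartbeats 2000000 in
lemma cfsf_inj (n K j t j' t' : ℕ) (hn : 3 ≤ n) (hK : 5 ≤ K)
    (hj : j ≤ n-2) (hj' : j' ≤ n-2) (ht : t < K) (ht' : t' < K)
    (hc : cf2 n K j t = cf2 n K j' t') (hs : sf2 n K j t = sf2 n K j' t') :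
    j = j' ∧ t = t' := by
  unfold cf2 at hc
  unfold sf2 at hs
  split_ifs at hc hs <;> omega

lemma block_mod_eq (n K : ℕ) (hn : 0 < n) (hK : 0 < K) (m s : ℕ) (hs : s < K) :
    (m*K+s) % (n*K) = (m%n)*K+s := by
  have h1 : m*K+s = (m%n)*K+s + (n*K)*(m/n) := by
    conv_lhs => rw [← Nat.div_add_mod m n]
    ring
  rw [h1, Nat.add_mul_mod_self_left]
  apply Nat.mod_eq_of_lt
  have h2 : m % n + 1 ≤ n := Nat.mod_lt m hn
  calc (m%n)*K+s < (m%n)*K+K := by omega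
    _ = (m%n+1)*K := by ring
    _ ≤ n*K := Nat.mul_le_mul_right K h2

lemma cast_block (n K : ℕ) (hn : 0 < n) (hK : 0 < K)
    (a b s s' : ℕ) (hs : s < K) (hs' : s' < K) (hab : a % n = b % n) (hss : s = s') :
    ((a*K+s : ℕ) : ZMod (n*K)) = ((b*K+s' : ℕ) : ZMod (n*K)) := by
  subst hss
  rw [ZMod.natCast_eq_natCast_iff', block_mod_eq n K hn hK a s hs,
    block_mod_eq n K hn hK b s hs, hab]

lemma block_congr (n K i : ℕ) (hn : 0 < n) (hK : 0 < K)
    (cc cc' s s' : ℕ) (hc : cc < n) (hc' : cc' < n) (hs : s < K) (hs' : s' < K)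
    (h : ((i+cc)*K+s) % (n*K) = ((i+cc')*K+s') % (n*K)) : cc = cc' ∧ s = s' := by
  rw [block_mod_eq n K hn hK _ _ hs, block_mod_eq n K hn hK _ _ hs'] at h
  have h1 : s = s' := by
    have := congrArg (· % K) h
    simpa [Nat.mul_add_mod', Nat.mod_eq_of_lt hs, Nat.mod_eq_of_lt hs'] using this
  subst h1
  have h2 : (i+cc) % n = (i+cc') % n := by
    have := Nat.add_right_cancel h
    exact Nat.eq_of_mul_eq_mul_right hK this
  have h3 : cc % n = cc' % n := Nat.ModEq.add_left_cancel' i h2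
  rw [Nat.mod_eq_of_lt hc, Nat.mod_eq_of_lt hc'] at h3
  exact ⟨h3, rfl⟩

lemma image_range_eq2 {β : Type} [DecidableEq β] (k : ℕ) (F G : ℕ → β)
    (h1 : ∀ t, t < k → ∃ s, s < k ∧ F t = G s) (h2 : ∀ s, s < k → ∃ t, t < k ∧ G s = F t) :
    (Finset.range k).image F = (Finset.range k).image G := by
  apply Finset.Subset.antisymm <;> intro x hx <;>
    simp only [Finset.mem_image, Finset.mem_range] at *
  · obtain ⟨t, ht, rfl⟩ := hx
    obtain ⟨s, hs, he⟩ := h1 t ht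
    exact ⟨s, hs, he.symm⟩
  · obtain ⟨t, ht, rfl⟩ := hx
    obtain ⟨s, hs, he⟩ := h2 t ht
    exact ⟨s, hs, he.symm⟩

lemma div_mod_self' (j t K : ℕ) (hK : 0 < K) (ht : t < K) : (j*K+t)/K = j ∧ (j*K+t)%K = t := by
  constructor
  · rw [Nat.mul_comm, Nat.mul_add_div hK, Nat.div_eq_of_lt ht]; omega
  · rw [Nat.mul_add_mod', Nat.mod_eq_of_lt ht]

-- eval lemmas
lemma Dfun_0 (n K : ℕ) : Dfun n K 0 = 3 := by simp [Dfun]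
lemma Dfun_1 (n K : ℕ) : Dfun n K 1 = (n-1)*K := by simp [Dfun]
lemma Dfun_2 (n K : ℕ) : Dfun n K 2 = K-2 := by simp [Dfun]
lemma Dfun_3 (n K : ℕ) : Dfun n K 3 = 2*K-1 := by simp [Dfun]
lemma Dfun_big (n K r : ℕ) (h : 4 ≤ r) : Dfun n K r = 0 := by
  unfold Dfun; rw [if_neg (by omega), if_neg (by omega), if_neg (by omega), if_neg (by omega)]

lemma tau2_00 (n K i : ℕ) : tau2 n K i 0 0 = (i+(n-1))*K+1 := by simp [tau2]
lemma tau2_01 (n K i : ℕ) : tau2 n K i 0 1 = (i+1)*K := by simp [tau2]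
lemma tau2_02 (n K i : ℕ) : tau2 n K i 0 2 = (i+1)*K+3 := by simp [tau2]
lemma tau2_0t (n K i t : ℕ) (h : 3 ≤ t) : tau2 n K i 0 t = i*K+t := by
  unfold tau2
  rw [if_pos rfl, if_neg (by omega), if_neg (by omega), if_neg (by omega)]
lemma tau2_10 (n K i : ℕ) : tau2 n K i 1 0 = (i+2)*K+2 := by simp [tau2]
lemma tau2_11 (n K i : ℕ) : tau2 n K i 1 1 = (i+2)*K := by simp [tau2]
lemma tau2_12 (n K i : ℕ) (h : n ≠ 3) : tau2 n K i 1 2 = (i+2)*K+1 := by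
  unfold tau2
  rw [if_neg (by omega), if_pos rfl, if_neg (by omega), if_neg (by omega), if_pos rfl, if_neg h]
lemma tau2_12_3 (n K i : ℕ) (h : n = 3) : tau2 n K i 1 2 = i*K := by
  unfold tau2
  rw [if_neg (by omega), if_pos rfl, if_neg (by omega), if_neg (by omega), if_pos rfl, if_pos h]
lemma tau2_1t (n K i t : ℕ) (h : 3 ≤ t) : tau2 n K i 1 t = (i+2)*K+t := by
  unfold tau2
  rw [if_neg (by omega), if_pos rfl, if_neg (by omega), if_neg (by omega), if_neg (by omega)]
lemma tau2_l0 (n K i : ℕ) (hn : 4 ≤ n) : tau2 n K i (n-2) 0 = (i+(n-1))*K := by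
  unfold tau2
  rw [if_neg (by omega), if_neg (by omega), if_pos rfl, if_pos rfl]
lemma tau2_l1 (n K i : ℕ) (hn : 4 ≤ n) : tau2 n K i (n-2) 1 = i*K := by
  unfold tau2
  rw [if_neg (by omega), if_neg (by omega), if_pos rfl, if_neg (by omega), if_pos rfl]
lemma tau2_lt (n K i t : ℕ) (hn : 4 ≤ n) (h : 2 ≤ t) :
    tau2 n K i (n-2) t = (i+(n-1))*K+t := by
  unfold tau2
  rw [if_neg (by omega), if_neg (by omega), if_pos rfl, if_neg (by omega), if_neg (by omega)]
lemma tau2_m (n K i j t : ℕ) (h2 : 2 ≤ j) (h3 : j ≤ n-3) (hn : 5 ≤ n) :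
    tau2 n K i j t = (i+1+j)*K+t := by
  unfold tau2
  rw [if_neg (by omega), if_neg (by omega), if_neg (by omega)]

def gfun (n K f' : ℕ) (φ : ZMod (n*K) → Fin f') : ZMod (n*K) → Fin f' :=
  fun z => φ (z + ((Dfun n K (z.val % K) : ℕ) : ZMod (n*K)))

def hfun (n K i f' : ℕ) (φ : ZMod (n*K) → Fin f') : ZMod ((n-1)*K) → Fin f' :=
  fun y => φ ((tau2 n K i (y.val / K) (y.val % K) : ℕ) : ZMod (n*K))


lemma gfun_cast (n K f' : ℕ) [NeZero (n*K)] (φ : ZMod (n*K) → Fin f') (x : ℕ) :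
    gfun n K f' φ ((x : ℕ) : ZMod (n*K)) = φ ((x + Dfun n K (x % K) : ℕ) : ZMod (n*K)) := by
  unfold gfun
  congr 1
  rw [ZMod.val_natCast, Nat.mod_mod_of_dvd _ ⟨n, Nat.mul_comm n K⟩, Nat.cast_add]

lemma hfun_cast (n K i f' : ℕ) [NeZero ((n-1)*K)] (φ : ZMod (n*K) → Fin f') (x : ℕ)
    (hx : x < (n-1)*K) :
    hfun n K i f' φ ((x : ℕ) : ZMod ((n-1)*K)) = φ ((tau2 n K i (x/K) (x%K) : ℕ) : ZMod (n*K)) := by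
  unfold hfun
  simp only [ZMod.val_natCast, Nat.mod_eq_of_lt hx]

lemma pival (n K : ℕ) (hK : 5 ≤ K) (s : ℕ) (hs : s < K) :
    (s + Dfun n K s) % K =
      if s = 0 then 3 else if s = 1 then 1 else if s = 2 then 0 else if s = 3 then 2 else s := by
  unfold Dfun
  split_ifs with h0 h1 h2 h3
  · subst h0; exact Nat.mod_eq_of_lt (by omega)
  · subst h1; rw [Nat.add_mul_mod_self_right]; exact Nat.mod_eq_of_lt (by omega)
  · subst h2; rw [show 2 + (K-2) = K from by omega]; exact Nat.mod_self K
  · subst h3; rw [show 3 + (2*K-1) = 2 + K*2 from by omega, Nat.add_mul_mod_self_left]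
    exact Nat.mod_eq_of_lt (by omega)
  · rw [Nat.add_zero]; exact Nat.mod_eq_of_lt hs

lemma gfun_inj (n K f' : ℕ) (hn : 3 ≤ n) (hK : 5 ≤ K) (φ : ZMod (n*K) → Fin f')
    (hφ : Function.Injective φ) : Function.Injective (gfun n K f' φ) := by
  haveI : NeZero (n*K) := ⟨Nat.mul_ne_zero (by omega) (by omega)⟩
  intro z w h
  have h2 := hφ h
  have hres : ∀ u : ZMod (n*K),
      (u + ((Dfun n K (u.val % K) : ℕ) : ZMod (n*K))).val % K
        = (u.val % K + Dfun n K (u.val % K)) % K := by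
    intro u
    rw [ZMod.val_add, ZMod.val_natCast,
      Nat.mod_mod_of_dvd _ ⟨n, Nat.mul_comm n K⟩]
    have e1 : u.val % K ≡ u.val [MOD K] := Nat.mod_modEq u.val K
    have e2 : Dfun n K (u.val % K) % (n*K) ≡ Dfun n K (u.val % K) [MOD K] :=
      (Nat.mod_modEq _ (n*K)).of_dvd ⟨n, Nat.mul_comm n K⟩
    exact (e1.add e2.symm).symm
  have h3 : (z.val % K + Dfun n K (z.val % K)) % K
      = (w.val % K + Dfun n K (w.val % K)) % K := by
    rw [← hres z, ← hres w, h2]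
  have hz : z.val % K < K := Nat.mod_lt _ (by omega)
  have hw : w.val % K < K := Nat.mod_lt _ (by omega)
  rw [pival n K hK _ hz, pival n K hK _ hw] at h3
  have h4 : z.val % K = w.val % K := by split_ifs at h3 <;> omega
  rw [h4] at h2
  exact add_right_cancel h2

lemma hfun_inj (n K i f' : ℕ) (hn : 3 ≤ n) (hK : 5 ≤ K) (φ : ZMod (n*K) → Fin f')
    (hφ : Function.Injective φ) : Function.Injective (hfun n K i f' φ) := by
  haveI : NeZero (n*K) := ⟨Nat.mul_ne_zero (by omega) (by omega)⟩
  haveI : NeZero ((n-1)*K) := ⟨Nat.mul_ne_zero (by omega) (by omega)⟩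
  have hK0 : 0 < K := by omega
  intro y y' h
  have h2 := hφ h
  rw [ZMod.natCast_eq_natCast_iff'] at h2
  have hx : y.val < (n-1)*K := ZMod.val_lt y
  have hx' : y'.val < (n-1)*K := ZMod.val_lt y'
  have hj : y.val / K ≤ n-2 := by
    have := (Nat.div_lt_iff_lt_mul hK0).2 hx
    omega
  have hj' : y'.val / K ≤ n-2 := by
    have := (Nat.div_lt_iff_lt_mul hK0).2 hx'
    omega
  have ht : y.val % K < K := Nat.mod_lt _ hK0
  have ht' : y'.val % K < K := Nat.mod_lt _ hK0
  rw [tau2_eq, tau2_eq] at h2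
  have hbc := block_congr n K i (by omega) hK0 _ _ _ _
    (cf2_lt n K _ _ hn hj) (cf2_lt n K _ _ hn hj')
    (sf2_lt n K _ _ hK ht) (sf2_lt n K _ _ hK ht') h2
  obtain ⟨hjj, htt⟩ := cfsf_inj n K _ _ _ _ hn hK hj hj' ht ht' hbc.1 hbc.2
  apply ZMod.val_injective
  have ey : y.val = K * (y.val / K) + y.val % K := (Nat.div_add_mod y.val K).symm
  have ey' : y'.val = K * (y'.val / K) + y'.val % K := (Nat.div_add_mod y'.val K).symm
  rw [ey, ey', hjj, htt]

lemma cycEdge_unfold (k' n' f' : ℕ) (F : ZMod (n' * k') → Fin f') (m : ℕ) :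
    cycEdge (k'+1) n' F m
      = (Finset.range (k'+1)).image (fun t => F ((m * k' + t : ℕ) : ZMod (n' * k'))) := rfl


lemma hfun_elem (n K i f' : ℕ) (hn : 3 ≤ n) (hK0 : 0 < K) [NeZero ((n-1)*K)]
    (φ : ZMod (n*K) → Fin f') (j t : ℕ) (hj : j ≤ n-2) (ht : t < K) :
    hfun n K i f' φ ((j*K+t : ℕ) : ZMod ((n-1)*K)) = φ ((tau2 n K i j t : ℕ) : ZMod (n*K)) := by
  have hlt : j*K+t < (n-1)*K := by
    calc j*K+t < j*K+K := Nat.add_lt_add_left ht (j*K)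
      _ = (j+1)*K := by ring
      _ ≤ (n-1)*K := Nat.mul_le_mul_right K (by omega)
  rw [hfun_cast n K i f' φ _ hlt, (div_mod_self' j t K hK0 ht).1, (div_mod_self' j t K hK0 ht).2]

lemma hfun_wrap (n K i f' : ℕ) (hn : 3 ≤ n) (hK0 : 0 < K) [NeZero ((n-1)*K)]
    (φ : ZMod (n*K) → Fin f') (x : ℕ) (hx : x = (n-1)*K) :
    hfun n K i f' φ ((x : ℕ) : ZMod ((n-1)*K)) = φ ((tau2 n K i 0 0 : ℕ) : ZMod (n*K)) := by
  subst hx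
  rw [ZMod.natCast_self, show (0 : ZMod ((n-1)*K)) = ((0:ℕ) : ZMod ((n-1)*K)) from by
    rw [Nat.cast_zero]]
  rw [hfun_cast n K i f' φ 0 (Nat.mul_pos (by omega) hK0), Nat.zero_div, Nat.zero_mod]

lemma gfun_elem (n K f' : ℕ) [NeZero (n*K)] (φ : ZMod (n*K) → Fin f') (i t : ℕ) :
    gfun n K f' φ ((i*K+t : ℕ) : ZMod (n*K))
      = φ ((i*K+t+Dfun n K (t%K) : ℕ) : ZMod (n*K)) := by
  rw [gfun_cast, Nat.mul_add_mod']

lemma modsucc (a n : ℕ) : (a % n + 1) % n = (a+1) % n :=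
  Nat.ModEq.add_right 1 (Nat.mod_modEq a n)


lemma edge0_eq (n K i f' : ℕ) (hn : 3 ≤ n) (hK : 5 ≤ K) (φ : ZMod (n*K) → Fin f') :
    cycEdge (K+1) (n-1) (hfun n K i f' φ) 0 = cycEdge (K+1) n (gfun n K f' φ) i := by
  haveI : NeZero (n*K) := ⟨Nat.mul_ne_zero (by omega) (by omega)⟩
  haveI : NeZero ((n-1)*K) := ⟨Nat.mul_ne_zero (by omega) (by omega)⟩
  have hK0 : 0 < K := by omega
  have hφc : ∀ a b : ℕ, a = b → φ ((a : ℕ) : ZMod (n*K)) = φ ((b : ℕ) : ZMod (n*K)) :=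
    fun a b h => by rw [h]
  have eq2 : i*K+2+(K-2) = (i+1)*K := by
    rw [show i*K+2+(K-2) = i*K+(2+(K-2)) from by ring, show 2+(K-2) = K from by omega]
    ring
  have eq3 : i*K+3+(2*K-1) = (i+2)*K+2 := by
    rw [show i*K+3+(2*K-1) = i*K+(3+(2*K-1)) from by ring, show 3+(2*K-1) = 2*K+2 from by omega]
    ring
  have A0 : hfun n K i f' φ ((0*K+0 : ℕ) : ZMod ((n-1)*K))
      = gfun n K f' φ ((i*K+1 : ℕ) : ZMod (n*K)) := by
    rw [hfun_elem n K i f' hn hK0 φ 0 0 (by omega) (by omega), tau2_00,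
      gfun_elem n K f' φ i 1, Nat.mod_eq_of_lt (show 1 < K by omega), Dfun_1]
    exact hφc _ _ (by ring)
  have A1 : hfun n K i f' φ ((0*K+1 : ℕ) : ZMod ((n-1)*K))
      = gfun n K f' φ ((i*K+2 : ℕ) : ZMod (n*K)) := by
    rw [hfun_elem n K i f' hn hK0 φ 0 1 (by omega) (by omega), tau2_01,
      gfun_elem n K f' φ i 2, Nat.mod_eq_of_lt (show 2 < K by omega), Dfun_2]
    exact hφc _ _ eq2.symm
  have A2 : hfun n K i f' φ ((0*K+2 : ℕ) : ZMod ((n-1)*K))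
      = gfun n K f' φ ((i*K+K : ℕ) : ZMod (n*K)) := by
    rw [hfun_elem n K i f' hn hK0 φ 0 2 (by omega) (by omega), tau2_02,
      gfun_elem n K f' φ i K, Nat.mod_self, Dfun_0]
    exact hφc _ _ (by ring)
  have A3 : hfun n K i f' φ ((0*K+3 : ℕ) : ZMod ((n-1)*K))
      = gfun n K f' φ ((i*K+0 : ℕ) : ZMod (n*K)) := by
    rw [hfun_elem n K i f' hn hK0 φ 0 3 (by omega) (by omega), tau2_0t n K i 3 (by omega),
      gfun_elem n K f' φ i 0, Nat.zero_mod, Dfun_0]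
  have Am : ∀ t : ℕ, 4 ≤ t → t < K → hfun n K i f' φ ((0*K+t : ℕ) : ZMod ((n-1)*K))
      = gfun n K f' φ ((i*K+t : ℕ) : ZMod (n*K)) := by
    intro t h4 h5
    rw [hfun_elem n K i f' hn hK0 φ 0 t (by omega) h5, tau2_0t n K i t (by omega),
      gfun_elem n K f' φ i t, Nat.mod_eq_of_lt h5, Dfun_big n K t h4]
    exact hφc _ _ (by ring)
  have AK : hfun n K i f' φ ((0*K+K : ℕ) : ZMod ((n-1)*K))
      = gfun n K f' φ ((i*K+3 : ℕ) : ZMod (n*K)) := by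
    rw [show (0*K+K : ℕ) = 1*K+0 from by ring,
      hfun_elem n K i f' hn hK0 φ 1 0 (by omega) (by omega), tau2_10,
      gfun_elem n K f' φ i 3, Nat.mod_eq_of_lt (show 3 < K by omega), Dfun_3]
    exact hφc _ _ eq3.symm
  rw [cycEdge_unfold, cycEdge_unfold]
  apply image_range_eq2
  · intro t ht
    have hc : t = 0 ∨ t = 1 ∨ t = 2 ∨ t = 3 ∨ (4 ≤ t ∧ t < K) ∨ t = K := by omega
    rcases hc with rfl|rfl|rfl|rfl|⟨h4,h5⟩|heq
    exacts [⟨1, by omega, A0⟩, ⟨2, by omega, A1⟩, ⟨K, by omega, A2⟩, ⟨0, by omega, A3⟩,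
      ⟨t, by omega, Am t h4 h5⟩, ⟨3, by omega, by rw [heq]; exact AK⟩]
  · intro s hs
    have hc : s = 0 ∨ s = 1 ∨ s = 2 ∨ s = 3 ∨ (4 ≤ s ∧ s < K) ∨ s = K := by omega
    rcases hc with rfl|rfl|rfl|rfl|⟨h4,h5⟩|heq
    exacts [⟨3, by omega, A3.symm⟩, ⟨0, by omega, A0.symm⟩, ⟨1, by omega, A1.symm⟩,
      ⟨K, by omega, AK.symm⟩, ⟨s, by omega, (Am s h4 h5).symm⟩,
      ⟨2, by omega, by rw [heq]; exact A2.symm⟩]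


lemma phi_block (n K f' : ℕ) (hn : 0 < n) (hK0 : 0 < K) (φ : ZMod (n*K) → Fin f')
    (a m sa sb : ℕ) (h1 : sa < K) (h2 : sb < K) (h3 : a % n = m % n) (h4 : sa = sb) :
    φ ((a*K+sa : ℕ) : ZMod (n*K)) = φ ((m%n*K+sb : ℕ) : ZMod (n*K)) :=
  congrArg φ (cast_block n K hn hK0 a (m%n) sa sb h1 h2
    (by rw [h3, Nat.mod_mod_of_dvd _ dvd_rfl]) h4)

lemma edge1_eq (n K i f' : ℕ) (hn : 3 ≤ n) (hK : 5 ≤ K) (φ : ZMod (n*K) → Fin f') :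
    cycEdge (K+1) (n-1) (hfun n K i f' φ) 1 = cycEdge (K+1) n φ ((i+2)%n) := by
  haveI : NeZero (n*K) := ⟨Nat.mul_ne_zero (by omega) (by omega)⟩
  haveI : NeZero ((n-1)*K) := ⟨Nat.mul_ne_zero (by omega) (by omega)⟩
  have hK0 : 0 < K := by omega
  have hn0 : 0 < n := by omega
  have B0 : hfun n K i f' φ ((1*K+0 : ℕ) : ZMod ((n-1)*K))
      = φ (((i+2)%n*K+2 : ℕ) : ZMod (n*K)) := by
    rw [hfun_elem n K i f' hn hK0 φ 1 0 (by omega) (by omega), tau2_10]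
    exact phi_block n K f' hn0 hK0 φ (i+2) (i+2) 2 2 (by omega) (by omega) rfl rfl
  have B1 : hfun n K i f' φ ((1*K+1 : ℕ) : ZMod ((n-1)*K))
      = φ (((i+2)%n*K+0 : ℕ) : ZMod (n*K)) := by
    rw [hfun_elem n K i f' hn hK0 φ 1 1 (by omega) (by omega), tau2_11]
    exact phi_block n K f' hn0 hK0 φ (i+2) (i+2) 0 0 (by omega) (by omega) rfl rfl
  have Bt : ∀ t : ℕ, 3 ≤ t → t < K → hfun n K i f' φ ((1*K+t : ℕ) : ZMod ((n-1)*K))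
      = φ (((i+2)%n*K+t : ℕ) : ZMod (n*K)) := by
    intro t h3 h5
    rw [hfun_elem n K i f' hn hK0 φ 1 t (by omega) h5, tau2_1t n K i t h3]
    exact phi_block n K f' hn0 hK0 φ (i+2) (i+2) t t h5 h5 rfl rfl
  rcases eq_or_ne n 3 with hn3 | hn3
  · have B2 : hfun n K i f' φ ((1*K+2 : ℕ) : ZMod ((n-1)*K))
        = φ (((i+2)%n*K+K : ℕ) : ZMod (n*K)) := by
      rw [hfun_elem n K i f' hn hK0 φ 1 2 (by omega) (by omega), tau2_12_3 n K i hn3,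
        show ((i+2)%n*K+K : ℕ) = ((i+2)%n+1)*K from by ring]
      refine congrArg φ (cast_block n K hn0 hK0 i ((i+2)%n+1) 0 0 (by omega) (by omega) ?_ rfl)
      rw [modsucc (i+2) n, show i+2+1 = i+3 from rfl, hn3]
      exact (Nat.add_mod_right i 3).symm
    have BK : hfun n K i f' φ ((1*K+K : ℕ) : ZMod ((n-1)*K))
        = φ (((i+2)%n*K+1 : ℕ) : ZMod (n*K)) := by
      rw [hfun_wrap n K i f' hn hK0 φ (1*K+K)
        (by rw [show (n:ℕ)-1 = 2 from by omega]; ring), tau2_00]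
      exact phi_block n K f' hn0 hK0 φ (i+(n-1)) (i+2) 1 1 (by omega) (by omega)
        (by rw [show i+(n-1) = i+2 from by omega]) rfl
    rw [cycEdge_unfold, cycEdge_unfold]
    apply image_range_eq2
    · intro t ht
      have hc : t = 0 ∨ t = 1 ∨ t = 2 ∨ (3 ≤ t ∧ t < K) ∨ t = K := by omega
      rcases hc with rfl|rfl|rfl|⟨h4,h5⟩|heq
      exacts [⟨2, by omega, B0⟩, ⟨0, by omega, B1⟩, ⟨K, by omega, B2⟩,
        ⟨t, by omega, Bt t h4 h5⟩, ⟨1, by omega, by rw [heq]; exact BK⟩]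
    · intro s hs
      have hc : s = 0 ∨ s = 1 ∨ s = 2 ∨ (3 ≤ s ∧ s < K) ∨ s = K := by omega
      rcases hc with rfl|rfl|rfl|⟨h4,h5⟩|heq
      exacts [⟨1, by omega, B1.symm⟩, ⟨K, by omega, BK.symm⟩, ⟨0, by omega, B0.symm⟩,
        ⟨s, by omega, (Bt s h4 h5).symm⟩, ⟨2, by omega, by rw [heq]; exact B2.symm⟩]
  · have B2 : hfun n K i f' φ ((1*K+2 : ℕ) : ZMod ((n-1)*K))
        = φ (((i+2)%n*K+1 : ℕ) : ZMod (n*K)) := by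
      rw [hfun_elem n K i f' hn hK0 φ 1 2 (by omega) (by omega), tau2_12 n K i hn3]
      exact phi_block n K f' hn0 hK0 φ (i+2) (i+2) 1 1 (by omega) (by omega) rfl rfl
    have BK : hfun n K i f' φ ((1*K+K : ℕ) : ZMod ((n-1)*K))
        = φ (((i+2)%n*K+K : ℕ) : ZMod (n*K)) := by
      rw [show (1*K+K : ℕ) = 2*K+0 from by ring,
        hfun_elem n K i f' hn hK0 φ 2 0 (by omega) (by omega),
        show ((i+2)%n*K+K : ℕ) = ((i+2)%n+1)*K from by ring]
      have hcong : (i+3) % n = ((i+2)%n+1) % n := by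
        rw [modsucc (i+2) n]
      rcases eq_or_ne n 4 with hn4 | hn5
      · rw [show tau2 n K i 2 0 = (i+(n-1))*K from by
          rw [show (2:ℕ) = n-2 from by omega]; exact tau2_l0 n K i (by omega)]
        refine congrArg φ (cast_block n K hn0 hK0 (i+(n-1)) ((i+2)%n+1) 0 0
          (by omega) (by omega) ?_ rfl)
        rw [show i+(n-1) = i+3 from by omega]; exact hcong
      · rw [tau2_m n K i 2 0 (by omega) (by omega) (by omega)]
        refine congrArg φ (cast_block n K hn0 hK0 (i+1+2) ((i+2)%n+1) 0 0
          (by omega) (by omega) ?_ rfl)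
        rw [show i+1+2 = i+3 from rfl]; exact hcong
    rw [cycEdge_unfold, cycEdge_unfold]
    apply image_range_eq2
    · intro t ht
      have hc : t = 0 ∨ t = 1 ∨ t = 2 ∨ (3 ≤ t ∧ t < K) ∨ t = K := by omega
      rcases hc with rfl|rfl|rfl|⟨h4,h5⟩|heq
      exacts [⟨2, by omega, B0⟩, ⟨0, by omega, B1⟩, ⟨1, by omega, B2⟩,
        ⟨t, by omega, Bt t h4 h5⟩, ⟨K, by omega, by rw [heq]; exact BK⟩]
    · intro s hs
      have hc : s = 0 ∨ s = 1 ∨ s = 2 ∨ (3 ≤ s ∧ s < K) ∨ s = K := by omega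
      rcases hc with rfl|rfl|rfl|⟨h4,h5⟩|heq
      exacts [⟨1, by omega, B1.symm⟩, ⟨2, by omega, B2.symm⟩, ⟨0, by omega, B0.symm⟩,
        ⟨s, by omega, (Bt s h4 h5).symm⟩, ⟨K, by omega, by rw [heq]; exact BK.symm⟩]

lemma edgemid_eq (n K i j f' : ℕ) (h2 : 2 ≤ j) (h3 : j ≤ n-3) (hn : 5 ≤ n) (hK : 5 ≤ K)
    (φ : ZMod (n*K) → Fin f') :
    cycEdge (K+1) (n-1) (hfun n K i f' φ) j = cycEdge (K+1) n φ ((i+1+j)%n) := by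
  haveI : NeZero (n*K) := ⟨Nat.mul_ne_zero (by omega) (by omega)⟩
  haveI : NeZero ((n-1)*K) := ⟨Nat.mul_ne_zero (by omega) (by omega)⟩
  have hK0 : 0 < K := by omega
  have hn0 : 0 < n := by omega
  have hn' : 3 ≤ n := by omega
  have Mt : ∀ t : ℕ, t < K → hfun n K i f' φ ((j*K+t : ℕ) : ZMod ((n-1)*K))
      = φ (((i+1+j)%n*K+t : ℕ) : ZMod (n*K)) := by
    intro t ht
    rw [hfun_elem n K i f' hn' hK0 φ j t (by omega) ht, tau2_m n K i j t h2 h3 hn]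
    exact phi_block n K f' hn0 hK0 φ (i+1+j) (i+1+j) t t ht ht rfl rfl
  have MK : hfun n K i f' φ ((j*K+K : ℕ) : ZMod ((n-1)*K))
      = φ (((i+1+j)%n*K+K : ℕ) : ZMod (n*K)) := by
    rw [show (j*K+K : ℕ) = (j+1)*K+0 from by ring,
      hfun_elem n K i f' hn' hK0 φ (j+1) 0 (by omega) (by omega),
      show ((i+1+j)%n*K+K : ℕ) = ((i+1+j)%n+1)*K from by ring]
    have hcong : (i+1+j+1) % n = ((i+1+j)%n+1) % n := (modsucc (i+1+j) n).symm
    rcases eq_or_ne (j+1) (n-2) with hj1 | hj1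
    · rw [show tau2 n K i (j+1) 0 = (i+(n-1))*K from by
        rw [hj1]; exact tau2_l0 n K i (by omega)]
      refine congrArg φ (cast_block n K hn0 hK0 (i+(n-1)) ((i+1+j)%n+1) 0 0
        (by omega) (by omega) ?_ rfl)
      rw [show i+(n-1) = i+1+j+1 from by omega]; exact hcong
    · rw [tau2_m n K i (j+1) 0 (by omega) (by omega) hn]
      refine congrArg φ (cast_block n K hn0 hK0 (i+1+(j+1)) ((i+1+j)%n+1) 0 0
        (by omega) (by omega) ?_ rfl)
      rw [show i+1+(j+1) = i+1+j+1 from by omega]; exact hcong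
  rw [cycEdge_unfold, cycEdge_unfold]
  apply image_range_eq2
  · intro t ht
    rcases (by omega : t < K ∨ t = K) with h | heq
    exacts [⟨t, by omega, Mt t h⟩, ⟨K, by omega, by rw [heq]; exact MK⟩]
  · intro s hs
    rcases (by omega : s < K ∨ s = K) with h | heq
    exacts [⟨s, by omega, (Mt s h).symm⟩, ⟨K, by omega, by rw [heq]; exact MK.symm⟩]

lemma edgelast_eq (n K i f' : ℕ) (hn : 4 ≤ n) (hK : 5 ≤ K) (φ : ZMod (n*K) → Fin f') :
    cycEdge (K+1) (n-1) (hfun n K i f' φ) (n-2) = cycEdge (K+1) n φ ((i+1+(n-2))%n) := by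
  haveI : NeZero (n*K) := ⟨Nat.mul_ne_zero (by omega) (by omega)⟩
  haveI : NeZero ((n-1)*K) := ⟨Nat.mul_ne_zero (by omega) (by omega)⟩
  have hK0 : 0 < K := by omega
  have hn0 : 0 < n := by omega
  have hn' : 3 ≤ n := by omega
  have L0 : hfun n K i f' φ (((n-2)*K+0 : ℕ) : ZMod ((n-1)*K))
      = φ (((i+1+(n-2))%n*K+0 : ℕ) : ZMod (n*K)) := by
    rw [hfun_elem n K i f' hn' hK0 φ (n-2) 0 (by omega) (by omega), tau2_l0 n K i hn]
    exact phi_block n K f' hn0 hK0 φ (i+(n-1)) (i+1+(n-2)) 0 0 (by omega) (by omega)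
      (by rw [show i+(n-1) = i+1+(n-2) from by omega]) rfl
  have L1 : hfun n K i f' φ (((n-2)*K+1 : ℕ) : ZMod ((n-1)*K))
      = φ (((i+1+(n-2))%n*K+K : ℕ) : ZMod (n*K)) := by
    rw [hfun_elem n K i f' hn' hK0 φ (n-2) 1 (by omega) (by omega), tau2_l1 n K i hn,
      show ((i+1+(n-2))%n*K+K : ℕ) = ((i+1+(n-2))%n+1)*K from by ring]
    refine congrArg φ (cast_block n K hn0 hK0 i ((i+1+(n-2))%n+1) 0 0
      (by omega) (by omega) ?_ rfl)
    rw [modsucc (i+1+(n-2)) n, show i+1+(n-2)+1 = i+n from by omega]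
    exact (Nat.add_mod_right i n).symm
  have Lt : ∀ t : ℕ, 2 ≤ t → t < K → hfun n K i f' φ (((n-2)*K+t : ℕ) : ZMod ((n-1)*K))
      = φ (((i+1+(n-2))%n*K+t : ℕ) : ZMod (n*K)) := by
    intro t h4 h5
    rw [hfun_elem n K i f' hn' hK0 φ (n-2) t (by omega) h5, tau2_lt n K i t hn h4]
    exact phi_block n K f' hn0 hK0 φ (i+(n-1)) (i+1+(n-2)) t t h5 h5
      (by rw [show i+(n-1) = i+1+(n-2) from by omega]) rfl
  have LK : hfun n K i f' φ (((n-2)*K+K : ℕ) : ZMod ((n-1)*K))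
      = φ (((i+1+(n-2))%n*K+1 : ℕ) : ZMod (n*K)) := by
    rw [hfun_wrap n K i f' hn' hK0 φ ((n-2)*K+K)
      (by rw [show (n:ℕ)-1 = n-2+1 from by omega]; ring), tau2_00]
    exact phi_block n K f' hn0 hK0 φ (i+(n-1)) (i+1+(n-2)) 1 1 (by omega) (by omega)
      (by rw [show i+(n-1) = i+1+(n-2) from by omega]) rfl
  rw [cycEdge_unfold, cycEdge_unfold]
  apply image_range_eq2
  · intro t ht
    have hc : t = 0 ∨ t = 1 ∨ (2 ≤ t ∧ t < K) ∨ t = K := by omega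
    rcases hc with rfl|rfl|⟨h4,h5⟩|heq
    exacts [⟨0, by omega, L0⟩, ⟨K, by omega, L1⟩, ⟨t, by omega, Lt t h4 h5⟩,
      ⟨1, by omega, by rw [heq]; exact LK⟩]
  · intro s hs
    have hc : s = 0 ∨ s = 1 ∨ (2 ≤ s ∧ s < K) ∨ s = K := by omega
    rcases hc with rfl|rfl|⟨h4,h5⟩|heq
    exacts [⟨0, by omega, L0.symm⟩, ⟨K, by omega, LK.symm⟩, ⟨s, by omega, (Lt s h4 h5).symm⟩,
      ⟨1, by omega, by rw [heq]; exact L1.symm⟩]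

end BlueAux

/-- If `K^k_f` (with `n ≥ 3`, `k ≥ 6`, `f ≥ (k-1)n`) is 2-coloured, contains a
red `C^k_n` and no red `C^k_{n-1}`, then it contains a blue `C^k_n`. -/
theorem blue_cycle_of_no_red_shorter_cycle (n k f : ℕ) (hn : 3 ≤ n) (hk : 6 ≤ k)
    (hf : (k - 1) * n ≤ f) (c : Finset (Fin f) → Bool)
    (hred : HasLooseCycle k n (fun e => c e = true))
    (hno : ¬ HasLooseCycle k (n - 1) (fun e => c e = true)) :
    HasLooseCycle k n (fun e => c e = false) := by
  obtain ⟨K, rfl⟩ : ∃ K, k = K + 1 := ⟨k - 1, by omega⟩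
  have hK : 5 ≤ K := by omega
  obtain ⟨φ, hφ, hred'⟩ := hred
  refine ⟨BlueAux.gfun n K f φ, BlueAux.gfun_inj n K f hn hK φ hφ, ?_⟩
  intro i hi
  show c (cycEdge (K+1) n (BlueAux.gfun n K f φ) i) = false
  cases hcb : c (cycEdge (K+1) n (BlueAux.gfun n K f φ) i) with
  | false => rfl
  | true =>
    exfalso
    apply hno
    refine ⟨BlueAux.hfun n K i f φ, BlueAux.hfun_inj n K i f hn hK φ hφ, ?_⟩
    intro j hj
    show c (cycEdge (K+1) (n-1) (BlueAux.hfun n K i f φ) j) = true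
    have hcases : j = 0 ∨ j = 1 ∨ (2 ≤ j ∧ j ≤ n-3 ∧ 5 ≤ n) ∨ (j = n-2 ∧ 4 ≤ n) := by omega
    rcases hcases with rfl | rfl | ⟨h2, h3, h5⟩ | ⟨heq, h4⟩
    · rw [BlueAux.edge0_eq n K i f hn hK φ]
      exact hcb
    · rw [BlueAux.edge1_eq n K i f hn hK φ]
      exact hred' _ (Nat.mod_lt _ (by omega))
    · rw [BlueAux.edgemid_eq n K i j f h2 h3 h5 hK φ]
      exact hred' _ (Nat.mod_lt _ (by omega))
    · rw [heq, BlueAux.edgelast_eq n K i f h4 hK φ]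
      exact hred' _ (Nat.mod_lt _ (by omega))
end

section
/- For all integers k ≥ 3 and n ≥ m ≥ 2, R(C^k_n, C^k_m) ≥ (k-1)n + ⌊(m-1)/2⌋, i.e., there is a red-blue coloring of the complete k-uniform hypergraph on (k-1)n + ⌊(m-1)/2⌋ - 1 vertices with no red C^k_n and no blue C^k_m. -/
open Finset

/-! Colour red exactly the edges inside a set `A` of `(k-1)n - 1` vertices. A red `C^k_n` has
`(k-1)n` vertices, all in `A`, so there is none. Every blue edge meets the complement `B`, of size
`⌊(m-1)/2⌋`; as each vertex of a loose cycle lies on at most two of its edges, a blue `C^k_m`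
would force `m ≤ 2|B| ≤ m - 1`. -/

section LooseCycle

variable {V : Type} [DecidableEq V] {k n : ℕ}

lemma exists_mem_cycEdge (hk : 1 < k) (hn : 0 < n) (f : ZMod (n * (k - 1)) → V)
    (x : ZMod (n * (k - 1))) : ∃ i < n, f x ∈ cycEdge k n f i := by
  have : NeZero (n * (k - 1)) := ⟨Nat.mul_ne_zero (by omega) (by omega)⟩
  refine ⟨x.val / (k - 1), Nat.div_lt_of_lt_mul (Nat.mul_comm n _ ▸ ZMod.val_lt x), ?_⟩
  refine mem_image.2 ⟨x.val % (k - 1), mem_range.2 ?_, ?_⟩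
  · exact (Nat.mod_lt _ (by omega)).trans (by omega)
  rw [Nat.div_add_mod', ZMod.natCast_zmod_val]

lemma IsLooseCycle.mul_le_card {P : Finset V → Prop} {f : ZMod (n * (k - 1)) → V}
    (hf : IsLooseCycle k n P f) (hk : 1 < k) (hn : 0 < n) {s : Finset V}
    (hs : ∀ e, P e → e ⊆ s) : n * (k - 1) ≤ #s := by
  have : NeZero (n * (k - 1)) := ⟨Nat.mul_ne_zero (by omega) (by omega)⟩
  calc n * (k - 1) = #(univ : Finset (ZMod (n * (k - 1)))) := by rw [card_univ, ZMod.card]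
    _ ≤ #s := card_le_card_of_injOn f (fun x _ => by
        obtain ⟨i, hi, hx⟩ := exists_mem_cycEdge hk hn f x
        exact hs _ (hf.2 i hi) hx) hf.1.injOn

/-- Vertex `t < k` of edge `i` has position in block `i` of `ZMod (n * (k - 1))`, except the last
one (`t = k - 1`), which is the first vertex of edge `i + 1` (cyclically). -/
lemma natCast_eq_or_add_one_eq_val_div {i t : ℕ} (hk : 1 < k) (hi : i < n) (ht : t < k) :
    (i : ZMod n) = (((i * (k - 1) + t : ℕ) : ZMod (n * (k - 1))).val / (k - 1) : ℕ) ∨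
      (i : ZMod n) + 1 = (((i * (k - 1) + t : ℕ) : ZMod (n * (k - 1))).val / (k - 1) : ℕ) := by
  rw [ZMod.val_natCast]
  rcases Nat.lt_or_eq_of_le (Nat.le_sub_one_of_lt ht) with ht | rfl
  · left
    have hlt : i * (k - 1) + t < n * (k - 1) := by nlinarith
    rw [Nat.mod_eq_of_lt hlt, Nat.mul_comm, Nat.mul_add_div (by omega), Nat.div_eq_of_lt ht,
      add_zero]
  · right
    rw [← Nat.succ_mul, Nat.mul_mod_mul_right, Nat.mul_div_cancel _ (by omega), ZMod.natCast_mod]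
    push_cast; rfl

lemma card_filter_mem_cycEdge_le_two (hk : 1 < k) {f : ZMod (n * (k - 1)) → V}
    (hf : Function.Injective f) (y : V) : #{i : Fin n | y ∈ cycEdge k n f i} ≤ 2 := by
  rcases eq_empty_or_nonempty {i : Fin n | y ∈ cycEdge k n f i} with h | ⟨i₀, hi₀⟩
  · simp [h]
  obtain ⟨x, rfl⟩ : ∃ x, f x = y := by
    obtain ⟨t, -, ht⟩ := mem_image.1 (mem_filter.1 hi₀).2
    exact ⟨_, ht⟩
  set q : ZMod n := ((x.val / (k - 1) : ℕ) : ZMod n)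
  calc #{i : Fin n | f x ∈ cycEdge k n f i}
      = #(image (fun i : Fin n => ((i : ℕ) : ZMod n)) {i : Fin n | f x ∈ cycEdge k n f i}) :=
        (card_image_of_injective _ fun i j hij => Fin.ext <| by
          simpa [ZMod.natCast_eq_natCast_iff', Nat.mod_eq_of_lt] using hij).symm
    _ ≤ #({q, q - 1} : Finset (ZMod n)) := card_le_card fun z hz => by
        obtain ⟨i, hi, rfl⟩ := mem_image.1 hz
        obtain ⟨t, ht, hxt⟩ := mem_image.1 (mem_filter.1 hi).2
        have h := natCast_eq_or_add_one_eq_val_div hk i.isLt (mem_range.1 ht)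
        rw [hf hxt] at h
        rcases h with h | h
        · exact mem_insert.2 (Or.inl h)
        · exact mem_insert_of_mem (mem_singleton.2 (eq_sub_of_add_eq h))
    _ ≤ 2 := card_le_two

lemma IsLooseCycle.le_two_mul_card {P : Finset V → Prop} {f : ZMod (n * (k - 1)) → V}
    (hf : IsLooseCycle k n P f) (hk : 1 < k) {t : Finset V}
    (ht : ∀ e, P e → ∃ v ∈ e, v ∈ t) : n ≤ 2 * #t := by
  choose g hg_edge hg_mem using fun i : Fin n => ht _ (hf.2 i i.isLt)
  calc n = #(univ : Finset (Fin n)) := (card_fin n).symm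
    _ ≤ 2 * #(univ.image g) := card_le_mul_card_image _ _ fun y _ =>
        (card_le_card fun i hi => mem_filter.2
          ⟨mem_univ _, (mem_filter.1 hi).2 ▸ hg_edge i⟩).trans
        (card_filter_mem_cycEdge_le_two hk hf.1 y)
    _ ≤ 2 * #t := Nat.mul_le_mul_left 2 (card_le_card (image_subset_iff.2 fun i _ => hg_mem i))

end LooseCycle

/-- For `k ≥ 3` and `n ≥ m ≥ 2`, `R(C^k_n, C^k_m) ≥ (k-1)n + ⌊(m-1)/2⌋`:
there is a colouring of `K^k_{(k-1)n + ⌊(m-1)/2⌋ - 1}` with no red `C^k_n` and no blue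
`C^k_m`. -/
theorem ramsey_loose_cycle_lower_bound (k n m : ℕ) (hk : 3 ≤ k) (hm : 2 ≤ m) (hnm : m ≤ n) :
    ∃ c : Finset (Fin ((k - 1) * n + (m - 1) / 2 - 1)) → Bool,
      ¬ HasLooseCycle k n (fun e => c e = true) ∧
      ¬ HasLooseCycle k m (fun e => c e = false) := by
  let A : Finset (Fin ((k - 1) * n + (m - 1) / 2 - 1)) := {x | x < (k - 1) * n - 1}
  have hA : #A = (k - 1) * n - 1 := by
    rw [Fin.card_filter_val_lt]
    omega
  refine ⟨fun e => decide (e ⊆ A), ?_, ?_⟩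
  · rintro ⟨f, hf⟩
    have hle := hf.mul_le_card (by omega) (by omega) fun e he => of_decide_eq_true he
    rw [hA, Nat.mul_comm] at hle
    have hpos : 0 < (k - 1) * n := Nat.mul_pos (by omega) (by omega)
    omega
  · rintro ⟨f, hf⟩
    have hle := hf.le_two_mul_card (t := Aᶜ) (by omega) fun e he => by
      simpa [not_subset] using of_decide_eq_false he
    rw [card_compl, Fintype.card_fin, hA] at hle
    omega
end

section
/- Let C = e₁e₂...eₙ be a red k-uniform loose cycle with n odd, n ≥ 3, in a 2-colored complete k-uniform hypergraph with at least (k-1)n vertices, k ≥ 3. Define fᵢ by shifting: fᵢ = (e_{2i-1} \ {last vertex of e_{2i-1}}) ∪ {last vertex of e_{2i}} for 1 ≤ i ≤ (n+1)/2, and fᵢ = (e_{2i-n-1} \ {last vertex of e_{2i-n-1}}) ∪ {last vertex of e_{2i-n}} for (n+3)/2 ≤ i ≤ n. Then f₁f₂...fₙ is a loose cycle C^k_n, and if there is no red copy of C^k_{n-1}, all fᵢ are blue, yielding a blue C^k_n. -/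
/-!
Write a vertex of the cycle on `ZMod (n * d)`, `d = k - 1`, as `q * d + r` with `r < d`: it sits
at position `r` of block `q`, and edge `e_q` is block `q` together with the first vertex of
block `q + 1`. The shifted edge `f_i` is then block `2i` together with the first vertex of
block `2i + 2`, so `f₀, …, f_{n-1}` is the loose cycle obtained by relabelling block `q` as
block `2q`; this is a bijection on blocks because `n` is odd. If some `f_i` were red, then
`f_i, e_{2i+2}, …, e_{2i+n-1}` (blocks `2i, 2i+2, 2i+3, …, 2i+n-1`) would be a red loose cycle
with `n - 1` edges.
-/

open Finset

/-- The shifted edge `f_{i+1} = (e_{2i+1} \ {last of e_{2i+1}}) ∪ {last of e_{2i+2}}`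
(1-indexed), i.e. 0-indexed: `(e_{2i} \ {last of e_{2i}}) ∪ {last of e_{2i+1}}`, indices
taken cyclically. -/
def shiftedEdge (k n : ℕ) {V : Type} [DecidableEq V] (f : ZMod (n * (k - 1)) → V)
    (i : ℕ) : Finset V :=
  insert (f (((2 * i + 2) * (k - 1) : ℕ) : ZMod (n * (k - 1))))
    ((cycEdge k n f (2 * i)).erase (f (((2 * i + 1) * (k - 1) : ℕ) : ZMod (n * (k - 1)))))


lemma Nat.div_mod_mul_add {a d r : ℕ} (hr : r < d) :
    (a * d + r) / d = a ∧ (a * d + r) % d = r :=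
  (Nat.div_mod_unique (by omega)).2 ⟨by ring, hr⟩

lemma Nat.eq_and_eq_of_mul_add_eq {a b d r s : ℕ} (hr : r < d) (hs : s < d)
    (h : a * d + r = b * d + s) : a = b ∧ r = s := by
  obtain ⟨ha, hr'⟩ := Nat.div_mod_mul_add (a := a) hr
  obtain ⟨hb, hs'⟩ := Nat.div_mod_mul_add (a := b) hs
  rw [h] at ha hr'
  exact ⟨ha.symm.trans hb, hr'.symm.trans hs'⟩

namespace ZMod

lemma val_natCast_mul_add {m d q r : ℕ} (hr : r < d) :
    ((q * d + r : ℕ) : ZMod (m * d)).val = q % m * d + r := by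
  obtain ⟨hdiv, hmod⟩ := Nat.div_mod_mul_add (a := q) hr
  rw [val_natCast, mul_comm m, Nat.mod_mul, hdiv, hmod, add_comm, mul_comm]

lemma natCast_mul_add_congr {m d a b : ℕ} (r : ℕ) (h : a ≡ b [MOD m]) :
    ((a * d + r : ℕ) : ZMod (m * d)) = ((b * d + r : ℕ) : ZMod (m * d)) :=
  (natCast_eq_natCast_iff _ _ _).2 ((h.mul_right' d).add_right r)

end ZMod

def blockMap (m n d : ℕ) (g : ℕ → ℕ) (x : ZMod (m * d)) : ZMod (n * d) :=
  ((g (x.val / d) * d + x.val % d : ℕ) : ZMod (n * d))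

section blockMap

variable {m n d : ℕ} {g : ℕ → ℕ}

lemma blockMap_natCast_mul_add {q r : ℕ} (hr : r < d) :
    blockMap m n d g ((q * d + r : ℕ) : ZMod (m * d)) =
      ((g (q % m) * d + r : ℕ) : ZMod (n * d)) := by
  obtain ⟨hdiv, hmod⟩ := Nat.div_mod_mul_add (a := q % m) hr
  rw [blockMap, ZMod.val_natCast_mul_add hr, hdiv, hmod]

lemma blockMap_injective (hm : 0 < m) (hd : 0 < d)
    (hg : ∀ a < m, ∀ b < m, g a ≡ g b [MOD n] → a = b) :
    Function.Injective (blockMap m n d g) := by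
  have : NeZero (m * d) := ⟨by positivity⟩
  have hblock (x : ZMod (m * d)) : x.val / d < m := (Nat.div_lt_iff_lt_mul hd).2 x.val_lt
  intro x y hxy
  have hpos (z : ZMod (m * d)) : z.val % d < d := Nat.mod_lt _ hd
  have hval := congrArg ZMod.val hxy
  simp only [blockMap] at hval
  rw [ZMod.val_natCast_mul_add (hpos x), ZMod.val_natCast_mul_add (hpos y)] at hval
  obtain ⟨hq, hr⟩ := Nat.eq_and_eq_of_mul_add_eq (hpos x) (hpos y) hval
  have hq' : x.val / d = y.val / d := hg _ (hblock x) _ (hblock y) hq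
  apply ZMod.val_injective
  rw [← Nat.div_add_mod' x.val d, ← Nat.div_add_mod' y.val d, hq', hr]

end blockMap

section edges

variable {V : Type} [DecidableEq V] {m n d : ℕ}

lemma cycEdge_eq_insert (f : ZMod (n * d) → V) (i : ℕ) :
    cycEdge (d + 1) n f i = insert (f (((i + 1) * d : ℕ) : ZMod (n * d)))
      ((range d).image fun r => f ((i * d + r : ℕ) : ZMod (n * d))) := by
  change (range (d + 1)).image (fun t => f ((i * d + t : ℕ) : ZMod (n * d))) = _
  rw [range_add_one, image_insert, add_one_mul]

lemma shiftedEdge_eq_insert (hn : n ≠ 1) (hd : 0 < d) {f : ZMod (n * d) → V}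
    (hf : Function.Injective f) (i : ℕ) :
    shiftedEdge (d + 1) n f i = insert (f (((2 * i + 2) * d : ℕ) : ZMod (n * d)))
      ((range d).image fun r => f ((2 * i * d + r : ℕ) : ZMod (n * d))) := by
  change insert (f (((2 * i + 2) * d : ℕ) : ZMod (n * d)))
    ((cycEdge (d + 1) n f (2 * i)).erase (f (((2 * i + 1) * d : ℕ) : ZMod (n * d)))) = _
  rw [cycEdge_eq_insert, erase_insert]
  simp only [mem_image, mem_range, not_exists, not_and]
  intro r hr hfr
  have hval := congrArg ZMod.val (hf hfr)
  rw [ZMod.val_natCast_mul_add hr, ← add_zero ((2 * i + 1) * d),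
    ZMod.val_natCast_mul_add hd] at hval
  have h01 : 2 * i + 0 ≡ 2 * i + 1 [MOD n] := (Nat.eq_and_eq_of_mul_add_eq hr hd hval).1
  exact hn (Nat.dvd_one.1 (Nat.modEq_zero_iff_dvd.1 (Nat.ModEq.add_left_cancel' _ h01).symm))

lemma cycEdge_comp_blockMap (hd : 0 < d) (f : ZMod (n * d) → V) {g : ℕ → ℕ} {i a b : ℕ}
    (ha : g (i % m) ≡ a [MOD n]) (hb : g ((i + 1) % m) ≡ b [MOD n]) :
    cycEdge (d + 1) m (f ∘ blockMap m n d g) i = insert (f ((b * d : ℕ) : ZMod (n * d)))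
      ((range d).image fun r => f ((a * d + r : ℕ) : ZMod (n * d))) := by
  rw [cycEdge_eq_insert]
  congr 1
  · rw [Function.comp_apply, ← add_zero ((i + 1) * d), blockMap_natCast_mul_add hd,
      ZMod.natCast_mul_add_congr 0 hb, add_zero]
  · refine image_congr fun r hr => ?_
    rw [Function.comp_apply, blockMap_natCast_mul_add (mem_range.1 hr),
      ZMod.natCast_mul_add_congr r ha]

end edges

section cycles

variable {V : Type} [DecidableEq V] {n d : ℕ}

lemma blockMap_double_injective (hodd : Odd n) (hd : 0 < d) :
    Function.Injective (blockMap n n d (2 * ·)) :=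
  blockMap_injective hodd.pos hd fun _ ha _ hb h =>
    (Nat.ModEq.cancel_left_of_coprime (Nat.coprime_two_right.2 hodd) h).eq_of_lt_of_lt ha hb

lemma cycEdge_comp_blockMap_double (hn : n ≠ 1) (hd : 0 < d) {f : ZMod (n * d) → V}
    (hf : Function.Injective f) (i : ℕ) :
    cycEdge (d + 1) n (f ∘ blockMap n n d (2 * ·)) i = shiftedEdge (d + 1) n f i := by
  rw [shiftedEdge_eq_insert hn hd hf,
    cycEdge_comp_blockMap hd f (a := 2 * i) (b := 2 * i + 2) ((Nat.mod_modEq i n).mul_left 2)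
      ((Nat.mod_modEq (i + 1) n).mul_left 2)]

/-- Block relabelling of the loose cycle `f_i, e_{2i+2}, …, e_{2i+n-1}`. -/
def detour (i j : ℕ) : ℕ := if j = 0 then 2 * i else 2 * i + 1 + j

lemma detour_eq_of_modEq {i a b : ℕ} (ha : a < n - 1) (hb : b < n - 1)
    (h : detour i a ≡ detour i b [MOD n]) : a = b := by
  have hshift (j : ℕ) : detour i j = 2 * i + if j = 0 then 0 else j + 1 := by
    unfold detour; split_ifs <;> omega
  rw [hshift, hshift] at h
  have := (Nat.ModEq.add_left_cancel' _ h).eq_of_lt_of_lt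
    (by split_ifs <;> omega) (by split_ifs <;> omega)
  split_ifs at this <;> omega

lemma isLooseCycle_detour (hn : 3 ≤ n) (hd : 0 < d) {P : Finset V → Prop}
    {f : ZMod (n * d) → V} (hC : IsLooseCycle (d + 1) n P f) {i : ℕ}
    (hi : P (shiftedEdge (d + 1) n f i)) :
    IsLooseCycle (d + 1) (n - 1) P (f ∘ blockMap (n - 1) n d (detour i)) := by
  refine ⟨hC.1.comp (blockMap_injective (by omega) hd fun _ ha _ hb => detour_eq_of_modEq ha hb),
    fun j hj => ?_⟩
  rcases j with _ | j
  · have h1 : 1 % (n - 1) = 1 := Nat.mod_eq_of_lt (by omega)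
    rwa [cycEdge_comp_blockMap hd f (a := 2 * i) (b := 2 * i + 2)
      (by rw [Nat.zero_mod, detour, if_pos rfl]) (by rw [h1, detour, if_neg one_ne_zero]),
      ← shiftedEdge_eq_insert (by omega) hd hC.1]
  · have ha : detour i ((j + 1) % (n - 1)) ≡ (2 * i + 2 + j) % n [MOD n] := by
      rw [Nat.mod_eq_of_lt hj, detour, if_neg (by omega),
        show 2 * i + 1 + (j + 1) = 2 * i + 2 + j by omega]
      exact (Nat.mod_modEq _ n).symm
    have hb : detour i ((j + 2) % (n - 1)) ≡ (2 * i + 2 + j) % n + 1 [MOD n] := by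
      refine Nat.ModEq.trans ?_ ((Nat.mod_modEq _ n).add_right 1).symm
      rcases Nat.lt_or_ge (j + 2) (n - 1) with hlt | hge
      · rw [Nat.mod_eq_of_lt hlt, detour, if_neg (by omega),
          show 2 * i + 1 + (j + 2) = 2 * i + 2 + j + 1 by omega]
      · rw [show j + 2 = n - 1 by omega, Nat.mod_self, detour, if_pos rfl,
          show 2 * i + 2 + j + 1 = 2 * i + n by omega]
        exact Nat.add_modEq_right.symm
    rw [cycEdge_comp_blockMap hd f ha hb, ← cycEdge_eq_insert]
    exact hC.2 _ (Nat.mod_lt _ (by omega))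

end cycles

theorem shifted_edges_form_blue_cycle_general (n k N : ℕ) (hn : 3 ≤ n) (hodd : Odd n) (hk : 3 ≤ k)
    (c : Finset (Fin N) → Bool)
    (f : ZMod (n * (k - 1)) → Fin N)
    (hf : IsLooseCycle k n (fun e => c e = true) f) :
    (∃ h : ZMod (n * (k - 1)) → Fin N, Function.Injective h ∧
        ∀ i < n, cycEdge k n h i = shiftedEdge k n f i) ∧
    (¬ HasLooseCycle k (n - 1) (fun e => c e = true) →
        (∀ i < n, c (shiftedEdge k n f i) = false) ∧
        HasLooseCycle k n (fun e => c e = false)) := by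
  obtain ⟨d, rfl⟩ : ∃ d, k = d + 1 := ⟨k - 1, by omega⟩
  have hd : 0 < d := by omega
  have hinj : Function.Injective (f ∘ blockMap n n d (2 * ·)) :=
    hf.1.comp (blockMap_double_injective hodd hd)
  have hedge := cycEdge_comp_blockMap_double (by omega) hd hf.1
  have hblue (hno : ¬ HasLooseCycle (d + 1) (n - 1) (fun e => c e = true)) (i : ℕ) :
      c (shiftedEdge (d + 1) n f i) = false := by
    by_contra hred
    exact hno ⟨_, isLooseCycle_detour hn hd hf (Bool.not_eq_false _ ▸ hred)⟩
  refine ⟨⟨_, hinj, fun i _ => hedge i⟩,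
    fun hno => ⟨fun i _ => hblue hno i, _, hinj, fun i _ => ?_⟩⟩
  rw [hedge]
  exact hblue hno i

/-- For a red loose cycle `C = e₁…eₙ` (`n` odd), the shifted edges `fᵢ` form a
loose cycle `C^k_n`, and if there is no red `C^k_{n-1}` then all the `fᵢ` are blue, giving a
blue `C^k_n`. -/
theorem shifted_edges_form_blue_cycle (n k N : ℕ) (hn : 3 ≤ n) (hodd : Odd n) (hk : 3 ≤ k)
    (hN : (k - 1) * n ≤ N) (c : Finset (Fin N) → Bool)
    (f : ZMod (n * (k - 1)) → Fin N)
    (hf : IsLooseCycle k n (fun e => c e = true) f) :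
    (∃ h : ZMod (n * (k - 1)) → Fin N, Function.Injective h ∧
        ∀ i < n, cycEdge k n h i = shiftedEdge k n f i) ∧
    (¬ HasLooseCycle k (n - 1) (fun e => c e = true) →
        (∀ i < n, c (shiftedEdge k n f i) = false) ∧
        HasLooseCycle k n (fun e => c e = false)) :=
  shifted_edges_form_blue_cycle_general n k N hn hodd hk c f hf
end

section
/- For every k ≥ 3 and n ≥ 2, any two vertex-disjoint k-uniform loose cycles C₁ with l₁ edges and C₂ with l₂ edges (l₁ + l₂ = n) in a hypergraph, together with any two disjoint edges g ∈ A and g' ∈ B of the 'connecting' types, form a loose cycle with l₁ + l₂ edges; consequently, if the coloring has no blue C^k_{l₁+l₂} and C₁, C₂ are blue, then no two disjoint blue connecting edges of complementary types A and B exist. -/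
open Finset

/-- A connecting edge of type `A` for the edges `eᵢ` of `C₁` and `fⱼ` of `C₂`. -/
def ConnectA (k l1 l2 : ℕ) {V : Type} [DecidableEq V]
    (f1 : ZMod (l1 * (k - 1)) → V) (f2 : ZMod (l2 * (k - 1)) → V) (i j : ℕ)
    (g : Finset V) : Prop :=
  ∃ (E' F' W' : Finset V) (v' u' : V),
    E' ⊆ (cycEdge k l1 f1 i) \
      {f1 (((i * (k - 1) : ℕ) : ZMod (l1 * (k - 1)))),
       f1 ((((i + 1) * (k - 1) : ℕ) : ZMod (l1 * (k - 1))))} ∧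
    F' ⊆ (cycEdge k l2 f2 j) \
      {f2 (((j * (k - 1) : ℕ) : ZMod (l2 * (k - 1)))),
       f2 ((((j + 1) * (k - 1) : ℕ) : ZMod (l2 * (k - 1))))} ∧
    (↑W' : Set V) ⊆ (Set.range f1 ∪ Set.range f2)ᶜ ∧
    v' ∈ (cycEdge k l1 f1 (i + l1 - 1)) \
      {f1 ((((i + l1 - 1) * (k - 1) : ℕ) : ZMod (l1 * (k - 1))))} ∧
    u' ∈ (cycEdge k l2 f2 (j + 1)) \
      {f2 ((((j + 2) * (k - 1) : ℕ) : ZMod (l2 * (k - 1))))} ∧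
    g = insert v' E' ∪ W' ∪ insert u' F' ∧ g.card = k

/-- A connecting edge of type `B` for the edges `eᵢ` of `C₁` and `fⱼ` of `C₂`. -/
def ConnectB (k l1 l2 : ℕ) {V : Type} [DecidableEq V]
    (f1 : ZMod (l1 * (k - 1)) → V) (f2 : ZMod (l2 * (k - 1)) → V) (i j : ℕ)
    (g : Finset V) : Prop :=
  ∃ (E' F' W' : Finset V) (v' u' : V),
    E' ⊆ (cycEdge k l1 f1 i) \
      {f1 (((i * (k - 1) : ℕ) : ZMod (l1 * (k - 1)))),
       f1 ((((i + 1) * (k - 1) : ℕ) : ZMod (l1 * (k - 1))))} ∧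
    F' ⊆ (cycEdge k l2 f2 j) \
      {f2 (((j * (k - 1) : ℕ) : ZMod (l2 * (k - 1)))),
       f2 ((((j + 1) * (k - 1) : ℕ) : ZMod (l2 * (k - 1))))} ∧
    (↑W' : Set V) ⊆ (Set.range f1 ∪ Set.range f2)ᶜ ∧
    v' ∈ (cycEdge k l1 f1 (i + 1)) \
      {f1 ((((i + 2) * (k - 1) : ℕ) : ZMod (l1 * (k - 1))))} ∧
    u' ∈ (cycEdge k l2 f2 (j + l2 - 1)) \
      {f2 ((((j + l2 - 1) * (k - 1) : ℕ) : ZMod (l2 * (k - 1))))} ∧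
    g = insert v' E' ∪ W' ∪ insert u' F' ∧ g.card = k

section blocks
variable {V : Type} [DecidableEq V] {k l : ℕ}

lemma not_modEq_of_lt {l a b : ℕ} (h1 : a < b) (h2 : b < a + l) : ¬ a ≡ b [MOD l] := by
  intro hm
  have hd := (Nat.modEq_iff_dvd' (le_of_lt h1)).1 hm
  have := Nat.le_of_dvd (by omega) hd
  omega

lemma not_modEq_symm {l a b : ℕ} (h : ¬ a ≡ b [MOD l]) : ¬ b ≡ a [MOD l] := fun h' => h h'.symm

lemma mod_mul_key {l K m s : ℕ} (hl : 0 < l) (hs : s < K) :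
    (m * K + s) % (l * K) = (m % l) * K + s := by
  have h1 : m * K + s = (l * K) * (m / l) + ((m % l) * K + s) := by
    have := Nat.div_add_mod m l
    nlinarith [Nat.div_add_mod m l]
  rw [h1, Nat.mul_add_mod]
  have hlt : (m % l) * K + s < l * K := by
    have h2 : m % l < l := Nat.mod_lt _ hl
    nlinarith
  exact Nat.mod_eq_of_lt hlt

lemma comp_eq {K a b s s' : ℕ} (hs : s < K) (hs' : s' < K) (h : a * K + s = b * K + s') :
    a = b ∧ s = s' := by
  have h1 : (a * K + s) % K = (b * K + s') % K := by rw [h]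
  rw [Nat.mul_comm a K, Nat.mul_comm b K, Nat.mul_add_mod, Nat.mul_add_mod,
    Nat.mod_eq_of_lt hs, Nat.mod_eq_of_lt hs'] at h1
  subst h1
  have : a * K = b * K := by omega
  have hK : 0 < K := by omega
  exact ⟨Nat.eq_of_mul_eq_mul_right hK this, rfl⟩

lemma cast_key (hk : 3 ≤ k) (hl : 2 ≤ l) {m m' s s' : ℕ} (hs : s < k - 1) (hs' : s' < k - 1) :
    ((m * (k - 1) + s : ℕ) : ZMod (l * (k - 1))) = ((m' * (k - 1) + s' : ℕ) : ZMod (l * (k - 1)))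
      ↔ (m ≡ m' [MOD l] ∧ s = s') := by
  rw [ZMod.natCast_eq_natCast_iff]
  unfold Nat.ModEq
  rw [mod_mul_key (by omega) hs, mod_mul_key (by omega) hs']
  constructor
  · intro h
    obtain ⟨h1, h2⟩ := comp_eq hs hs' h
    exact ⟨h1, h2⟩
  · rintro ⟨h1, rfl⟩; rw [h1]

variable {f : ZMod (l * (k - 1)) → V}

lemma Fkey (hk : 3 ≤ k) (hl : 2 ≤ l) (hf : Function.Injective f) {m m' s s' : ℕ}
    (hs : s < k - 1) (hs' : s' < k - 1) :
    f ((m * (k - 1) + s : ℕ) : ZMod (l * (k - 1))) = f ((m' * (k - 1) + s' : ℕ) : ZMod (l * (k - 1)))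
      ↔ (m ≡ m' [MOD l] ∧ s = s') := by
  rw [hf.eq_iff, cast_key hk hl hs hs']

lemma mem_cycEdge_iff {a : ℕ} {x : V} :
    x ∈ cycEdge k l f a ↔ ∃ s < k, x = f ((a * (k - 1) + s : ℕ) : ZMod (l * (k - 1))) := by
  simp [cycEdge, eq_comm]

lemma mem_cycEdge_iff' (hk : 3 ≤ k) {a : ℕ} {x : V} :
    x ∈ cycEdge k l f a ↔
      (∃ s, 0 < s ∧ s < k - 1 ∧ x = f ((a * (k - 1) + s : ℕ) : ZMod (l * (k - 1)))) ∨
      x = f ((a * (k - 1) + 0 : ℕ) : ZMod (l * (k - 1))) ∨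
      x = f (((a + 1) * (k - 1) + 0 : ℕ) : ZMod (l * (k - 1))) := by
  rw [mem_cycEdge_iff]
  constructor
  · rintro ⟨s, hs, rfl⟩
    by_cases h0 : s = 0
    · subst h0; right; left; rfl
    · by_cases hs1 : s < k - 1
      · exact Or.inl ⟨s, by omega, hs1, rfl⟩
      · have hsk : s = k - 1 := by omega
        subst hsk
        right; right
        have he : a * (k - 1) + (k - 1) = (a + 1) * (k - 1) + 0 := by rw [Nat.succ_mul, Nat.add_zero]
        rw [he]
  · rintro (⟨s, h0, h1, rfl⟩ | rfl | rfl)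
    · exact ⟨s, by omega, rfl⟩
    · exact ⟨0, by omega, rfl⟩
    · refine ⟨k - 1, by omega, ?_⟩
      have he : a * (k - 1) + (k - 1) = (a + 1) * (k - 1) + 0 := by rw [Nat.succ_mul, Nat.add_zero]
      rw [he]


lemma cycEdge_congr (hk : 3 ≤ k) {a b : ℕ} (hab : a ≡ b [MOD l]) :
    cycEdge k l f a = cycEdge k l f b := by
  unfold cycEdge
  apply Finset.image_congr
  intro t ht
  simp only
  congr 1
  rw [ZMod.natCast_eq_natCast_iff]
  exact (hab.mul_right' (k - 1)).add_right t

lemma cycEdge_inter (hk : 3 ≤ k) (hl : 2 ≤ l) (hf : Function.Injective f) {a b : ℕ} {x : V}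
    (h1 : ¬ a ≡ b [MOD l]) (hxa : x ∈ cycEdge k l f a) (hxb : x ∈ cycEdge k l f b) :
    (x = f (((a + 1) * (k - 1) + 0 : ℕ) : ZMod (l * (k - 1))) ∧ (a + 1) ≡ b [MOD l]) ∨
    (x = f (((b + 1) * (k - 1) + 0 : ℕ) : ZMod (l * (k - 1))) ∧ (b + 1) ≡ a [MOD l]) := by
  have hK : 0 < k - 1 := by omega
  rw [mem_cycEdge_iff' hk] at hxa hxb
  rcases hxa with ⟨s, hs0, hs1, rfl⟩ | rfl | rfl
  · rcases hxb with ⟨s', hs0', hs1', he⟩ | he | he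
    · exact absurd ((Fkey hk hl hf hs1 hs1').1 he).1 h1
    · exact absurd ((Fkey hk hl hf hs1 hK).1 he).2 (by omega)
    · exact absurd ((Fkey hk hl hf hs1 hK).1 he).2 (by omega)
  · rcases hxb with ⟨s', hs0', hs1', he⟩ | he | he
    · exact absurd ((Fkey hk hl hf hK hs1').1 he).2 (by omega)
    · exact absurd ((Fkey hk hl hf hK hK).1 he).1 h1
    · exact Or.inr ⟨he.symm ▸ he.symm, ((Fkey hk hl hf hK hK).1 he).1.symm⟩
  · rcases hxb with ⟨s', hs0', hs1', he⟩ | he | he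
    · exact absurd ((Fkey hk hl hf hK hs1').1 he).2 (by omega)
    · exact Or.inl ⟨rfl, ((Fkey hk hl hf hK hK).1 he).1⟩
    · exact absurd (Nat.ModEq.add_right_cancel' 1 ((Fkey hk hl hf hK hK).1 he).1) h1

lemma card_cycEdge (hk : 3 ≤ k) (hl : 2 ≤ l) (hf : Function.Injective f) (a : ℕ) :
    (cycEdge k l f a).card = k := by
  rw [cycEdge, Finset.card_image_of_injOn, Finset.card_range]
  intro s hs s' hs' h
  simp only [Finset.coe_range, Set.mem_Iio] at hs hs'
  have h2 : a * (k - 1) + s ≡ a * (k - 1) + s' [MOD l * (k - 1)] := by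
    rw [← ZMod.natCast_eq_natCast_iff]
    exact_mod_cast hf h
  have h3 : s ≡ s' [MOD l * (k - 1)] := h2.add_left_cancel' _
  have hlt : 2 * (k - 1) ≤ l * (k - 1) := Nat.mul_le_mul_right _ hl
  rwa [Nat.ModEq, Nat.mod_eq_of_lt (by omega), Nat.mod_eq_of_lt (by omega)] at h3

lemma mem_range_of_mem_cycEdge {a : ℕ} {x : V} (h : x ∈ cycEdge k l f a) : x ∈ Set.range f := by
  rw [mem_cycEdge_iff] at h
  obtain ⟨s, _, rfl⟩ := h
  exact ⟨_, rfl⟩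


lemma modEq_eq {l a b : ℕ} (h : a ≡ b [MOD l]) (h1 : a ≤ b) (h2 : b < a + l) : a = b := by
  have hd := (Nat.modEq_iff_dvd' h1).1 h
  rcases Nat.eq_zero_or_pos (b - a) with h0 | h0
  · omega
  · have := Nat.le_of_dvd h0 hd
    omega

lemma mem_edge_cases (hk : 3 ≤ k) (hl : 2 ≤ l) (hf : Function.Injective f) {c b s : ℕ}
    (h1 : s < k - 1) (hmem : f ((c * (k - 1) + s : ℕ) : ZMod (l * (k - 1))) ∈ cycEdge k l f b) :
    c ≡ b [MOD l] ∨ (s = 0 ∧ c ≡ b + 1 [MOD l]) := by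
  have hK : 0 < k - 1 := by omega
  rw [mem_cycEdge_iff' hk] at hmem
  rcases hmem with ⟨s', hs0', hs1', he⟩ | he | he
  · exact Or.inl ((Fkey hk hl hf h1 hs1').1 he).1
  · exact Or.inl ((Fkey hk hl hf h1 hK).1 he).1
  · obtain ⟨hm, hs⟩ := (Fkey hk hl hf h1 hK).1 he
    exact Or.inr ⟨hs, hm⟩

lemma flex_mem (hk : 3 ≤ k) (hl : 2 ≤ l) (hf : Function.Injective f) {c b s : ℕ}
    (h0 : 0 < s) (h1 : s ≤ k - 1)
    (hmem : f ((c * (k - 1) + s : ℕ) : ZMod (l * (k - 1))) ∈ cycEdge k l f b) :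
    c ≡ b [MOD l] ∨ (s = k - 1 ∧ c + 1 ≡ b [MOD l]) := by
  by_cases hs : s < k - 1
  · rcases mem_edge_cases hk hl hf hs hmem with h | ⟨h, _⟩
    · exact Or.inl h
    · omega
  · have hsk : s = k - 1 := by omega
    subst hsk
    have he : c * (k - 1) + (k - 1) = (c + 1) * (k - 1) + 0 := by
      rw [Nat.succ_mul, Nat.add_zero]
    rw [he] at hmem
    rcases mem_edge_cases hk hl hf (by omega) hmem with h | ⟨_, h⟩
    · exact Or.inr ⟨rfl, h⟩
    · exact Or.inl (Nat.ModEq.add_right_cancel' 1 h)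

lemma interior_mem (hk : 3 ≤ k) (hl : 2 ≤ l) (hf : Function.Injective f) {c b s : ℕ}
    (h0 : 0 < s) (h1 : s < k - 1)
    (hmem : f ((c * (k - 1) + s : ℕ) : ZMod (l * (k - 1))) ∈ cycEdge k l f b) :
    c ≡ b [MOD l] := by
  rcases mem_edge_cases hk hl hf h1 hmem with h | ⟨h, _⟩
  · exact h
  · omega

lemma endpoint_mem (hk : 3 ≤ k) (a : ℕ) :
    f (((a + 1) * (k - 1) + 0 : ℕ) : ZMod (l * (k - 1))) ∈ cycEdge k l f a := by
  rw [mem_cycEdge_iff]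
  refine ⟨k - 1, by omega, ?_⟩
  congr 2
  rw [Nat.succ_mul, Nat.add_zero]

lemma point_mem (hk : 3 ≤ k) {s : ℕ} (a : ℕ) (hs : s < k) :
    f ((a * (k - 1) + s : ℕ) : ZMod (l * (k - 1))) ∈ cycEdge k l f a := by
  rw [mem_cycEdge_iff]
  exact ⟨s, hs, rfl⟩

end blocks

noncomputable def edgeFill {V : Type} [DecidableEq V] (M : Finset V) (d : V) (r : ℕ) : V :=
  if hr : r < M.card then (M.equivFin.symm ⟨r, hr⟩ : V) else d

lemma edgeFill_mem {V : Type} [DecidableEq V] {M : Finset V} {d : V} {r : ℕ} (hr : r < M.card) :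
    edgeFill M d r ∈ M := by
  rw [edgeFill, dif_pos hr]
  exact Finset.coe_mem _

lemma edgeFill_inj {V : Type} [DecidableEq V] {M : Finset V} {d : V} {r r' : ℕ}
    (hr : r < M.card) (hr' : r' < M.card) (h : edgeFill M d r = edgeFill M d r') : r = r' := by
  simp only [edgeFill] at h
  rw [dif_pos hr, dif_pos hr'] at h
  have h2 := M.equivFin.symm.injective (Subtype.ext h)
  simpa using h2

lemma edgeFill_surj {V : Type} [DecidableEq V] {M : Finset V} {d : V} {x : V} (hx : x ∈ M) :
    ∃ r, r < M.card ∧ edgeFill M d r = x := by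
  refine ⟨M.equivFin ⟨x, hx⟩, (M.equivFin ⟨x, hx⟩).isLt, ?_⟩
  rw [edgeFill, dif_pos (M.equivFin ⟨x, hx⟩).isLt]
  have h2 : (⟨(M.equivFin ⟨x, hx⟩ : ℕ), (M.equivFin ⟨x, hx⟩).isLt⟩ : Fin M.card) =
      M.equivFin ⟨x, hx⟩ := rfl
  rw [h2, Equiv.symm_apply_apply]

noncomputable def cycFun (k n : ℕ) {V : Type} [DecidableEq V] (S : ℕ → Finset V) (α : ℕ → V) :
    ZMod (n * (k - 1)) → V :=
  fun x => if x.val % (k - 1) = 0 then α (x.val / (k - 1))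
    else edgeFill (S (x.val / (k - 1)) \ {α (x.val / (k - 1)), α ((x.val / (k - 1) + 1) % n)})
      (α 0) (x.val % (k - 1) - 1)

lemma build_loose_cycle {V : Type} [DecidableEq V] (k n : ℕ) (hk : 3 ≤ k) (hn : 1 ≤ n)
    (S : ℕ → Finset V) (α : ℕ → V)
    (hcard : ∀ t < n, (S t).card = k)
    (hα : ∀ t < n, α t ∈ S t)
    (hα' : ∀ t < n, α ((t + 1) % n) ∈ S t)
    (hne : ∀ t < n, α t ≠ α ((t + 1) % n))
    (hD : ∀ t < n, ∀ t' < n, t ≠ t' →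
      Disjoint (S t \ {α ((t + 1) % n)}) (S t' \ {α ((t' + 1) % n)})) :
    Function.Injective (cycFun k n S α) ∧ ∀ t < n, cycEdge k n (cycFun k n S α) t = S t := by
  have hK : 2 ≤ k - 1 := by omega
  have hN : 0 < n * (k - 1) := by
    have := Nat.mul_le_mul hn hK
    omega
  haveI : NeZero (n * (k - 1)) := ⟨by omega⟩
  have hMcard : ∀ t < n, (S t \ {α t, α ((t + 1) % n)}).card = k - 2 := by
    intro t ht
    rw [Finset.card_sdiff_of_subset, hcard t ht, Finset.card_pair (hne t ht)]
    intro y hy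
    simp only [Finset.mem_insert, Finset.mem_singleton] at hy
    rcases hy with rfl | rfl
    exacts [hα t ht, hα' t ht]
  have hαD : ∀ t < n, α t ∈ S t \ {α ((t + 1) % n)} := fun t ht =>
    Finset.mem_sdiff.2 ⟨hα t ht, by simp [hne t ht]⟩
  have hMD : ∀ t, (S t \ {α t, α ((t + 1) % n)}) ⊆ S t \ {α ((t + 1) % n)} := by
    intro t y hy
    simp only [Finset.mem_sdiff, Finset.mem_insert, Finset.mem_singleton] at hy ⊢
    tauto
  have hαnotM : ∀ t < n, ∀ t', α t' ∉ S t \ {α t, α ((t + 1) % n)} → True := fun _ _ _ _ => trivial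
  have hval : ∀ m : ℕ, m < n * (k - 1) → ((m : ℕ) : ZMod (n * (k - 1))).val = m := by
    intro m hm
    rw [ZMod.val_natCast, Nat.mod_eq_of_lt hm]
  -- computation lemmas
  have hcomp0 : ∀ t < n, cycFun k n S α ((t * (k - 1) + 0 : ℕ) : ZMod (n * (k - 1))) = α t := by
    intro t ht
    have hlt : t * (k - 1) + 0 < n * (k - 1) := by
      have := Nat.mul_le_mul (show t + 1 ≤ n by omega) (le_refl (k - 1))
      have h2 : (t + 1) * (k - 1) = t * (k - 1) + (k - 1) := Nat.succ_mul _ _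
      omega
    unfold cycFun
    rw [hval _ hlt]
    have hmod : (t * (k - 1) + 0) % (k - 1) = 0 := by
      rw [Nat.add_zero, Nat.mul_mod_left]
    have hdiv : (t * (k - 1) + 0) / (k - 1) = t := by
      rw [Nat.add_zero, Nat.mul_div_cancel _ (by omega)]
    rw [hmod, hdiv, if_pos rfl]
  have hcompMid : ∀ t < n, ∀ s, 0 < s → s < k - 1 →
      cycFun k n S α ((t * (k - 1) + s : ℕ) : ZMod (n * (k - 1))) =
        edgeFill (S t \ {α t, α ((t + 1) % n)}) (α 0) (s - 1) := by
    intro t ht s h0 h1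
    have hlt : t * (k - 1) + s < n * (k - 1) := by
      have := Nat.mul_le_mul (show t + 1 ≤ n by omega) (le_refl (k - 1))
      have h2 : (t + 1) * (k - 1) = t * (k - 1) + (k - 1) := Nat.succ_mul _ _
      omega
    unfold cycFun
    rw [hval _ hlt]
    have hmod : (t * (k - 1) + s) % (k - 1) = s := by
      rw [Nat.mul_comm, Nat.mul_add_mod, Nat.mod_eq_of_lt h1]
    have hdiv : (t * (k - 1) + s) / (k - 1) = t := by
      rw [Nat.mul_comm, Nat.mul_add_div (by omega), Nat.div_eq_of_lt h1, Nat.add_zero]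
    rw [hmod, hdiv, if_neg (by omega)]
  have hcompK : ∀ t < n, cycFun k n S α ((t * (k - 1) + (k - 1) : ℕ) : ZMod (n * (k - 1))) =
      α ((t + 1) % n) := by
    intro t ht
    have he : t * (k - 1) + (k - 1) = (t + 1) * (k - 1) := (Nat.succ_mul _ _).symm
    by_cases htn : t + 1 < n
    · have hlt : (t + 1) * (k - 1) < n * (k - 1) := by
        exact Nat.mul_lt_mul_of_lt_of_le htn (le_refl _) (by omega)
      unfold cycFun
      rw [he, hval _ hlt]
      have hmod : ((t + 1) * (k - 1)) % (k - 1) = 0 := Nat.mul_mod_left _ _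
      have hdiv : ((t + 1) * (k - 1)) / (k - 1) = t + 1 := Nat.mul_div_cancel _ (by omega)
      rw [hmod, hdiv, if_pos rfl, Nat.mod_eq_of_lt htn]
    · have htn2 : t + 1 = n := by omega
      have hvz : (((t + 1) * (k - 1) : ℕ) : ZMod (n * (k - 1))).val = 0 := by
        rw [htn2, ZMod.val_natCast, Nat.mod_self]
      unfold cycFun
      rw [he, hvz]
      simp only [Nat.zero_mod, Nat.zero_div, if_true]
      rw [htn2, Nat.mod_self]
  constructor
  · -- injectivity
    intro x y hxy
    by_contra hneq
    have hvne : x.val ≠ y.val := fun h => hneq (ZMod.val_injective _ h)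
    have hx := ZMod.val_lt x
    have hy := ZMod.val_lt y
    have hqa : x.val / (k - 1) < n := by
      rw [Nat.div_lt_iff_lt_mul (by omega : 0 < k - 1)]
      omega
    have hqb : y.val / (k - 1) < n := by
      rw [Nat.div_lt_iff_lt_mul (by omega : 0 < k - 1)]
      omega
    have hra : x.val % (k - 1) < k - 1 := Nat.mod_lt _ (by omega)
    have hrb : y.val % (k - 1) < k - 1 := Nat.mod_lt _ (by omega)
    have hda := Nat.div_add_mod x.val (k - 1)
    have hdb := Nat.div_add_mod y.val (k - 1)
    unfold cycFun at hxy
    by_cases h1 : x.val % (k - 1) = 0 <;> by_cases h2 : y.val % (k - 1) = 0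
    · rw [if_pos h1, if_pos h2] at hxy
      -- α qa = α qb
      have : x.val / (k - 1) = y.val / (k - 1) := by
        by_contra hcon
        exact Finset.disjoint_left.1
          (hD _ hqa _ hqb hcon) (hαD _ hqa) (hxy ▸ hαD _ hqb)
      apply hvne
      rw [← hda, ← hdb, this, h1, h2]
    · rw [if_pos h1, if_neg h2] at hxy
      have hmem : edgeFill (S (y.val / (k - 1)) \
            {α (y.val / (k - 1)), α ((y.val / (k - 1) + 1) % n)}) (α 0) (y.val % (k - 1) - 1) ∈
          S (y.val / (k - 1)) \ {α (y.val / (k - 1)), α ((y.val / (k - 1) + 1) % n)} :=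
        edgeFill_mem (by rw [hMcard _ hqb]; omega)
      rw [← hxy] at hmem
      by_cases hcon : x.val / (k - 1) = y.val / (k - 1)
      · rw [← hcon] at hmem
        simp only [Finset.mem_sdiff, Finset.mem_insert, Finset.mem_singleton] at hmem
        exact hmem.2 (Or.inl trivial)
      · exact Finset.disjoint_left.1 (hD _ hqa _ hqb hcon) (hαD _ hqa) (hMD _ hmem)
    · rw [if_neg h1, if_pos h2] at hxy
      have hmem : edgeFill (S (x.val / (k - 1)) \
            {α (x.val / (k - 1)), α ((x.val / (k - 1) + 1) % n)}) (α 0) (x.val % (k - 1) - 1) ∈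
          S (x.val / (k - 1)) \ {α (x.val / (k - 1)), α ((x.val / (k - 1) + 1) % n)} :=
        edgeFill_mem (by rw [hMcard _ hqa]; omega)
      rw [hxy] at hmem
      by_cases hcon : y.val / (k - 1) = x.val / (k - 1)
      · rw [← hcon] at hmem
        simp only [Finset.mem_sdiff, Finset.mem_insert, Finset.mem_singleton] at hmem
        exact hmem.2 (Or.inl trivial)
      · exact Finset.disjoint_left.1 (hD _ hqb _ hqa hcon) (hαD _ hqb) (hMD _ hmem)
    · rw [if_neg h1, if_neg h2] at hxy
      by_cases hcon : x.val / (k - 1) = y.val / (k - 1)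
      · rw [← hcon] at hxy
        have hre := edgeFill_inj (by rw [hMcard _ hqa]; omega) (by rw [hMcard _ hqa]; omega) hxy
        have hre2 : x.val % (k - 1) = y.val % (k - 1) := by omega
        apply hvne
        rw [← hda, ← hdb, hcon, hre2]
      · have hm1 : edgeFill (S (x.val / (k - 1)) \
              {α (x.val / (k - 1)), α ((x.val / (k - 1) + 1) % n)}) (α 0) (x.val % (k - 1) - 1) ∈
            S (x.val / (k - 1)) \ {α (x.val / (k - 1)), α ((x.val / (k - 1) + 1) % n)} :=
          edgeFill_mem (by rw [hMcard _ hqa]; omega)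
        have hm2 : edgeFill (S (y.val / (k - 1)) \
              {α (y.val / (k - 1)), α ((y.val / (k - 1) + 1) % n)}) (α 0) (y.val % (k - 1) - 1) ∈
            S (y.val / (k - 1)) \ {α (y.val / (k - 1)), α ((y.val / (k - 1) + 1) % n)} :=
          edgeFill_mem (by rw [hMcard _ hqb]; omega)
        rw [hxy] at hm1
        exact Finset.disjoint_left.1 (hD _ hqa _ hqb hcon) (hMD _ hm1) (hMD _ hm2)
  · -- edges
    intro t ht
    apply Finset.ext
    intro x
    rw [mem_cycEdge_iff]
    constructor
    · rintro ⟨s, hs, rfl⟩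
      by_cases h0 : s = 0
      · subst h0
        rw [hcomp0 t ht]
        exact hα t ht
      · by_cases h1 : s < k - 1
        · rw [hcompMid t ht s (by omega) h1]
          have hmm : edgeFill (S t \ {α t, α ((t + 1) % n)}) (α 0) (s - 1) ∈
              S t \ {α t, α ((t + 1) % n)} := edgeFill_mem (by rw [hMcard t ht]; omega)
          exact (Finset.mem_sdiff.1 hmm).1
        · have hsk : s = k - 1 := by omega
          subst hsk
          rw [hcompK t ht]
          exact hα' t ht
    · intro hx
      by_cases hx1 : x = α t
      · exact ⟨0, by omega, by rw [hcomp0 t ht, hx1]⟩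
      · by_cases hx2 : x = α ((t + 1) % n)
        · exact ⟨k - 1, by omega, by rw [hcompK t ht, hx2]⟩
        · have hxM : x ∈ S t \ {α t, α ((t + 1) % n)} := by
            simp only [Finset.mem_sdiff, Finset.mem_insert, Finset.mem_singleton]
            exact ⟨hx, by tauto⟩
          obtain ⟨r, hr, hrx⟩ := edgeFill_surj (d := α 0) hxM
          rw [hMcard t ht] at hr
          refine ⟨r + 1, by omega, ?_⟩
          rw [hcompMid t ht (r + 1) (by omega) (by omega)]
          simp only [Nat.add_sub_cancel]
          exact hrx.symm


set_option maxHeartbeats 2000000 in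
lemma join_app {V : Type} [DecidableEq V] (k l1 l2 : ℕ)
    (hk : 3 ≤ k) (hl1 : 2 ≤ l1) (hl2 : 2 ≤ l2)
    (f1 : ZMod (l1 * (k - 1)) → V) (f2 : ZMod (l2 * (k - 1)) → V)
    (hf1 : Function.Injective f1) (hf2 : Function.Injective f2)
    (hdisj : Disjoint (Set.range f1) (Set.range f2))
    (i j : ℕ) (hi : i < l1) (hj : j < l2)
    (g g' : Finset V)
    (hA : ConnectA k l1 l2 f1 f2 i j g) (hB : ConnectB k l1 l2 f1 f2 i j g')
    (hgg : Disjoint g g') :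
    ∃ h : ZMod ((l1 + l2) * (k - 1)) → V, Function.Injective h ∧
      ∀ t < l1 + l2,
        cycEdge k (l1 + l2) h t = g ∨ cycEdge k (l1 + l2) h t = g' ∨
        (∃ i' < l1, i' ≠ i ∧ cycEdge k (l1 + l2) h t = cycEdge k l1 f1 i') ∨
        (∃ j' < l2, j' ≠ j ∧ cycEdge k (l1 + l2) h t = cycEdge k l2 f2 j') := by
  classical
  obtain ⟨E1, F1, W1, v', u', hE1, hF1, hW1, hv', hu', hgdef, hgcard⟩ := hA
  obtain ⟨E2, F2, W2, v2, u2, hE2, hF2, hW2, hv2, hu2, hgdef2, hgcard2⟩ := hB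
  set n := l1 + l2 with hndef
  set α : ℕ → V := fun t =>
    if t = 0 then v2
    else if t ≤ l1 - 2 then f1 (((i + 1 + t) * (k - 1) + 0 : ℕ))
    else if t = l1 - 1 then v'
    else if t = l1 then u'
    else if t ≤ n - 2 then f2 (((j + 1 + (t - l1)) * (k - 1) + 0 : ℕ))
    else u2 with hαdef
  set S : ℕ → Finset V := fun t =>
    if t ≤ l1 - 2 then cycEdge k l1 f1 ((i + 1 + t) % l1)
    else if t = l1 - 1 then g
    else if t ≤ n - 2 then cycEdge k l2 f2 ((j + 1 + (t - l1)) % l2)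
    else g' with hSdef
  -- evaluation lemmas
  have e0 : α 0 = v2 := by simp [hαdef]
  have e1 : ∀ t, 0 < t → t ≤ l1 - 2 → α t = f1 (((i + 1 + t) * (k - 1) + 0 : ℕ)) := by
    intro t h1 h2
    simp only [hαdef]
    split_ifs <;> first | rfl | (exfalso; omega)
  have e2 : α (l1 - 1) = v' := by
    simp only [hαdef]
    split_ifs <;> first | rfl | (exfalso; omega)
  have e3 : α l1 = u' := by
    simp only [hαdef]
    split_ifs <;> first | rfl | (exfalso; omega)
  have e4 : ∀ t, l1 < t → t ≤ n - 2 → α t = f2 (((j + 1 + (t - l1)) * (k - 1) + 0 : ℕ)) := by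
    intro t h1 h2
    simp only [hαdef]
    split_ifs <;> first | rfl | (exfalso; omega)
  have e5 : α (n - 1) = u2 := by
    simp only [hαdef]
    split_ifs <;> first | rfl | (exfalso; omega)
  have s1 : ∀ t, t ≤ l1 - 2 → S t = cycEdge k l1 f1 ((i + 1 + t) % l1) := by
    intro t h
    simp only [hSdef]
    split_ifs <;> first | rfl | (exfalso; omega)
  have s2 : S (l1 - 1) = g := by
    simp only [hSdef]
    split_ifs <;> first | rfl | (exfalso; omega)
  have s3 : ∀ t, l1 - 1 < t → t ≤ n - 2 → S t = cycEdge k l2 f2 ((j + 1 + (t - l1)) % l2) := by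
    intro t h1 h2
    simp only [hSdef]
    split_ifs <;> first | rfl | (exfalso; omega)
  have s4 : S (n - 1) = g' := by
    simp only [hSdef]
    split_ifs <;> first | rfl | (exfalso; omega)
  -- digests
  have hK0 : 0 < k - 1 := by omega
  have hr12 : ∀ {x : V}, x ∈ Set.range f1 → x ∈ Set.range f2 → False :=
    fun h1 h2 => Set.disjoint_left.1 hdisj h1 h2
  have hv'd : ∃ s, 0 < s ∧ s ≤ k - 1 ∧ v' = f1 (((i + l1 - 1) * (k - 1) + s : ℕ)) := by
    obtain ⟨hm, hne'⟩ := Finset.mem_sdiff.1 hv'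
    rw [mem_cycEdge_iff] at hm
    obtain ⟨s, hs, hv⟩ := hm
    refine ⟨s, ?_, by omega, hv⟩
    rcases Nat.eq_zero_or_pos s with rfl | h
    · rw [Nat.add_zero] at hv
      exact absurd (Finset.mem_singleton.2 hv) hne'
    · exact h
  have hu2d : ∃ s, 0 < s ∧ s ≤ k - 1 ∧ u2 = f2 (((j + l2 - 1) * (k - 1) + s : ℕ)) := by
    obtain ⟨hm, hne'⟩ := Finset.mem_sdiff.1 hu2
    rw [mem_cycEdge_iff] at hm
    obtain ⟨s, hs, hv⟩ := hm
    refine ⟨s, ?_, by omega, hv⟩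
    rcases Nat.eq_zero_or_pos s with rfl | h
    · rw [Nat.add_zero] at hv
      exact absurd (Finset.mem_singleton.2 hv) hne'
    · exact h
  have hu'd : ∃ s, s < k - 1 ∧ u' = f2 (((j + 1) * (k - 1) + s : ℕ)) := by
    obtain ⟨hm, hne'⟩ := Finset.mem_sdiff.1 hu'
    rw [mem_cycEdge_iff] at hm
    obtain ⟨s, hs, hv⟩ := hm
    refine ⟨s, ?_, hv⟩
    by_contra hcon
    have hsk : s = k - 1 := by omega
    subst hsk
    rw [show (j + 1) * (k - 1) + (k - 1) = (j + 2) * (k - 1) by ring] at hv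
    exact absurd (Finset.mem_singleton.2 hv) hne'
  have hv2d : ∃ s, s < k - 1 ∧ v2 = f1 (((i + 1) * (k - 1) + s : ℕ)) := by
    obtain ⟨hm, hne'⟩ := Finset.mem_sdiff.1 hv2
    rw [mem_cycEdge_iff] at hm
    obtain ⟨s, hs, hv⟩ := hm
    refine ⟨s, ?_, hv⟩
    by_contra hcon
    have hsk : s = k - 1 := by omega
    subst hsk
    rw [show (i + 1) * (k - 1) + (k - 1) = (i + 2) * (k - 1) by ring] at hv
    exact absurd (Finset.mem_singleton.2 hv) hne'
  have hE1d : ∀ x ∈ E1, ∃ s, 0 < s ∧ s < k - 1 ∧ x = f1 ((i * (k - 1) + s : ℕ)) := by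
    intro x hx
    have hm := hE1 hx
    rw [Finset.mem_sdiff] at hm
    obtain ⟨hm1, hm2⟩ := hm
    simp only [Finset.mem_insert, Finset.mem_singleton, not_or] at hm2
    rw [mem_cycEdge_iff] at hm1
    obtain ⟨s, hs, hv⟩ := hm1
    refine ⟨s, ?_, ?_, hv⟩
    · rcases Nat.eq_zero_or_pos s with rfl | h
      · rw [Nat.add_zero] at hv
        exact absurd hv hm2.1
      · exact h
    · by_contra hcon
      have hsk : s = k - 1 := by omega
      subst hsk
      rw [show i * (k - 1) + (k - 1) = (i + 1) * (k - 1) by rw [Nat.succ_mul]] at hv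
      exact absurd hv hm2.2
  have hE2d : ∀ x ∈ E2, ∃ s, 0 < s ∧ s < k - 1 ∧ x = f1 ((i * (k - 1) + s : ℕ)) := by
    intro x hx
    have hm := hE2 hx
    rw [Finset.mem_sdiff] at hm
    obtain ⟨hm1, hm2⟩ := hm
    simp only [Finset.mem_insert, Finset.mem_singleton, not_or] at hm2
    rw [mem_cycEdge_iff] at hm1
    obtain ⟨s, hs, hv⟩ := hm1
    refine ⟨s, ?_, ?_, hv⟩
    · rcases Nat.eq_zero_or_pos s with rfl | h
      · rw [Nat.add_zero] at hv
        exact absurd hv hm2.1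
      · exact h
    · by_contra hcon
      have hsk : s = k - 1 := by omega
      subst hsk
      rw [show i * (k - 1) + (k - 1) = (i + 1) * (k - 1) by rw [Nat.succ_mul]] at hv
      exact absurd hv hm2.2
  have hF1d : ∀ x ∈ F1, ∃ s, 0 < s ∧ s < k - 1 ∧ x = f2 ((j * (k - 1) + s : ℕ)) := by
    intro x hx
    have hm := hF1 hx
    rw [Finset.mem_sdiff] at hm
    obtain ⟨hm1, hm2⟩ := hm
    simp only [Finset.mem_insert, Finset.mem_singleton, not_or] at hm2
    rw [mem_cycEdge_iff] at hm1
    obtain ⟨s, hs, hv⟩ := hm1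
    refine ⟨s, ?_, ?_, hv⟩
    · rcases Nat.eq_zero_or_pos s with rfl | h
      · rw [Nat.add_zero] at hv
        exact absurd hv hm2.1
      · exact h
    · by_contra hcon
      have hsk : s = k - 1 := by omega
      subst hsk
      rw [show j * (k - 1) + (k - 1) = (j + 1) * (k - 1) by rw [Nat.succ_mul]] at hv
      exact absurd hv hm2.2
  have hF2d : ∀ x ∈ F2, ∃ s, 0 < s ∧ s < k - 1 ∧ x = f2 ((j * (k - 1) + s : ℕ)) := by
    intro x hx
    have hm := hF2 hx
    rw [Finset.mem_sdiff] at hm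
    obtain ⟨hm1, hm2⟩ := hm
    simp only [Finset.mem_insert, Finset.mem_singleton, not_or] at hm2
    rw [mem_cycEdge_iff] at hm1
    obtain ⟨s, hs, hv⟩ := hm1
    refine ⟨s, ?_, ?_, hv⟩
    · rcases Nat.eq_zero_or_pos s with rfl | h
      · rw [Nat.add_zero] at hv
        exact absurd hv hm2.1
      · exact h
    · by_contra hcon
      have hsk : s = k - 1 := by omega
      subst hsk
      rw [show j * (k - 1) + (k - 1) = (j + 1) * (k - 1) by rw [Nat.succ_mul]] at hv
      exact absurd hv hm2.2
  have hW1d : ∀ x ∈ W1, x ∉ Set.range f1 ∧ x ∉ Set.range f2 := by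
    intro x hx
    have := hW1 (Finset.mem_coe.2 hx)
    simp only [Set.mem_compl_iff, Set.mem_union, not_or] at this
    exact this
  have hW2d : ∀ x ∈ W2, x ∉ Set.range f1 ∧ x ∉ Set.range f2 := by
    intro x hx
    have := hW2 (Finset.mem_coe.2 hx)
    simp only [Set.mem_compl_iff, Set.mem_union, not_or] at this
    exact this
  have hgmem : ∀ x : V, x ∈ g ↔ (x = v' ∨ x ∈ E1 ∨ x ∈ W1 ∨ x = u' ∨ x ∈ F1) := by
    intro x
    rw [hgdef]
    simp only [Finset.mem_union, Finset.mem_insert]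
    tauto
  have hg2mem : ∀ x : V, x ∈ g' ↔ (x = v2 ∨ x ∈ E2 ∨ x ∈ W2 ∨ x = u2 ∨ x ∈ F2) := by
    intro x
    rw [hgdef2]
    simp only [Finset.mem_union, Finset.mem_insert]
    tauto
  have hv'g : v' ∈ g := (hgmem v').2 (Or.inl rfl)
  have hu'g : u' ∈ g := (hgmem u').2 (Or.inr (Or.inr (Or.inr (Or.inl rfl))))
  have hv2g : v2 ∈ g' := (hg2mem v2).2 (Or.inl rfl)
  have hu2g : u2 ∈ g' := (hg2mem u2).2 (Or.inr (Or.inr (Or.inr (Or.inl rfl))))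
  have hCE1 : ∀ a : ℕ, cycEdge k l1 f1 (a % l1) = cycEdge k l1 f1 a :=
    fun a => cycEdge_congr hk (Nat.mod_modEq a l1)
  have hCE2 : ∀ a : ℕ, cycEdge k l2 f2 (a % l2) = cycEdge k l2 f2 a :=
    fun a => cycEdge_congr hk (Nat.mod_modEq a l2)
  -- range of f1/f2 membership helpers
  have hRE1 : ∀ x ∈ E1, x ∈ Set.range f1 := by
    intro x hx
    obtain ⟨s, _, _, rfl⟩ := hE1d x hx
    exact ⟨_, rfl⟩
  have hRE2 : ∀ x ∈ E2, x ∈ Set.range f1 := by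
    intro x hx
    obtain ⟨s, _, _, rfl⟩ := hE2d x hx
    exact ⟨_, rfl⟩
  have hRF1 : ∀ x ∈ F1, x ∈ Set.range f2 := by
    intro x hx
    obtain ⟨s, _, _, rfl⟩ := hF1d x hx
    exact ⟨_, rfl⟩
  have hRF2 : ∀ x ∈ F2, x ∈ Set.range f2 := by
    intro x hx
    obtain ⟨s, _, _, rfl⟩ := hF2d x hx
    exact ⟨_, rfl⟩
  have hRv' : v' ∈ Set.range f1 := by
    obtain ⟨s, _, _, hv⟩ := hv'd
    exact ⟨_, hv.symm⟩
  have hRu' : u' ∈ Set.range f2 := by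
    obtain ⟨s, _, hv⟩ := hu'd
    exact ⟨_, hv.symm⟩
  have hRv2 : v2 ∈ Set.range f1 := by
    obtain ⟨s, _, hv⟩ := hv2d
    exact ⟨_, hv.symm⟩
  have hRu2 : u2 ∈ Set.range f2 := by
    obtain ⟨s, _, _, hv⟩ := hu2d
    exact ⟨_, hv.symm⟩
  -- interior membership facts
  have hxE1 : ∀ x ∈ E1, ∀ b, x ∈ cycEdge k l1 f1 b → i ≡ b [MOD l1] := by
    intro x hx b hxb
    obtain ⟨s, hs0, hs1, rfl⟩ := hE1d x hx
    exact interior_mem hk hl1 hf1 hs0 hs1 hxb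
  have hxE2 : ∀ x ∈ E2, ∀ b, x ∈ cycEdge k l1 f1 b → i ≡ b [MOD l1] := by
    intro x hx b hxb
    obtain ⟨s, hs0, hs1, rfl⟩ := hE2d x hx
    exact interior_mem hk hl1 hf1 hs0 hs1 hxb
  have hxF1 : ∀ x ∈ F1, ∀ b, x ∈ cycEdge k l2 f2 b → j ≡ b [MOD l2] := by
    intro x hx b hxb
    obtain ⟨s, hs0, hs1, rfl⟩ := hF1d x hx
    exact interior_mem hk hl2 hf2 hs0 hs1 hxb
  have hxF2 : ∀ x ∈ F2, ∀ b, x ∈ cycEdge k l2 f2 b → j ≡ b [MOD l2] := by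
    intro x hx b hxb
    obtain ⟨s, hs0, hs1, rfl⟩ := hF2d x hx
    exact interior_mem hk hl2 hf2 hs0 hs1 hxb
  have hxv' : ∀ b, ¬ (i + l1 - 1) ≡ b [MOD l1] → ¬ (i + l1) ≡ b [MOD l1] →
      v' ∉ cycEdge k l1 f1 b := by
    intro b hb1 hb2 hmem
    obtain ⟨s, hs0, hs1, hveq⟩ := hv'd
    rw [hveq] at hmem
    rcases flex_mem hk hl1 hf1 hs0 hs1 hmem with h | ⟨_, h⟩
    · exact hb1 h
    · rw [show i + l1 - 1 + 1 = i + l1 by omega] at h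
      exact hb2 h
  have hxu2 : ∀ b, ¬ (j + l2 - 1) ≡ b [MOD l2] → ¬ (j + l2) ≡ b [MOD l2] →
      u2 ∉ cycEdge k l2 f2 b := by
    intro b hb1 hb2 hmem
    obtain ⟨s, hs0, hs1, hveq⟩ := hu2d
    rw [hveq] at hmem
    rcases flex_mem hk hl2 hf2 hs0 hs1 hmem with h | ⟨_, h⟩
    · exact hb1 h
    · rw [show j + l2 - 1 + 1 = j + l2 by omega] at h
      exact hb2 h
  have hcard : ∀ t < n, (S t).card = k := by
    intro t ht
    by_cases h1 : t ≤ l1 - 2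
    · rw [s1 t h1]
      exact card_cycEdge hk hl1 hf1 _
    · by_cases h2 : t = l1 - 1
      · rw [h2, s2]
        exact hgcard
      · by_cases h3 : t ≤ n - 2
        · rw [s3 t (by omega) h3]
          exact card_cycEdge hk hl2 hf2 _
        · rw [show t = n - 1 by omega, s4]
          exact hgcard2
  have hαmem : ∀ t < n, α t ∈ S t := by
    intro t ht
    by_cases h1 : t ≤ l1 - 2
    · rw [s1 t h1, hCE1]
      by_cases h0 : t = 0
      · subst h0
        rw [e0]
        obtain ⟨s, hs, hveq⟩ := hv2d
        rw [hveq, show i + 1 + 0 = i + 1 by omega]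
        exact point_mem hk _ (by omega)
      · rw [e1 t (by omega) h1]
        exact point_mem hk _ (by omega)
    · by_cases h2 : t = l1 - 1
      · rw [h2, s2, e2]
        exact hv'g
      · by_cases h3 : t ≤ n - 2
        · rw [s3 t (by omega) h3, hCE2]
          by_cases h4 : t = l1
          · rw [h4, e3, show j + 1 + (l1 - l1) = j + 1 by omega]
            exact (Finset.mem_sdiff.1 hu').1
          · rw [e4 t (by omega) h3]
            exact point_mem hk _ (by omega)
        · rw [show t = n - 1 by omega, s4, e5]
          exact hu2g
  have hα'mem : ∀ t < n, α ((t + 1) % n) ∈ S t := by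
    intro t ht
    by_cases h9 : t = n - 1
    · rw [h9, show n - 1 + 1 = n by omega, Nat.mod_self, e0, s4]
      exact hv2g
    · rw [Nat.mod_eq_of_lt (show t + 1 < n by omega)]
      by_cases h1 : t ≤ l1 - 2
      · rw [s1 t h1, hCE1]
        by_cases h1b : t + 1 ≤ l1 - 2
        · rw [e1 (t + 1) (by omega) h1b, show i + 1 + (t + 1) = (i + 1 + t) + 1 by omega]
          exact endpoint_mem hk _
        · rw [show t + 1 = l1 - 1 by omega, e2, show i + 1 + t = i + l1 - 1 by omega]
          exact (Finset.mem_sdiff.1 hv').1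
      · by_cases h2 : t = l1 - 1
        · rw [h2, show l1 - 1 + 1 = l1 by omega, e3, s2]
          exact hu'g
        · rw [s3 t (by omega) (by omega), hCE2]
          by_cases h3 : t + 1 ≤ n - 2
          · rw [e4 (t + 1) (by omega) h3,
              show j + 1 + (t + 1 - l1) = (j + 1 + (t - l1)) + 1 by omega]
            exact endpoint_mem hk _
          · rw [show t + 1 = n - 1 by omega, e5, show j + 1 + (t - l1) = j + l2 - 1 by omega]
            exact (Finset.mem_sdiff.1 hu2).1
  have hnee : ∀ t < n, α t ≠ α ((t + 1) % n) := by
    intro t ht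
    by_cases h9 : t = n - 1
    · rw [h9, show n - 1 + 1 = n by omega, Nat.mod_self, e5, e0]
      intro hcon
      exact hr12 hRv2 (by rw [← hcon]; exact hRu2)
    · rw [Nat.mod_eq_of_lt (show t + 1 < n by omega)]
      by_cases h2 : t = l1 - 1
      · rw [h2, show l1 - 1 + 1 = l1 by omega, e2, e3]
        intro hcon
        exact hr12 hRv' (by rw [hcon]; exact hRu')
      · by_cases h3 : t + 1 = l1 - 1
        · rw [h3, e2]
          by_cases h0 : t = 0
          · rw [h0, e0]
            intro hcon
            exact Finset.disjoint_left.1 hgg (by rw [hcon]; exact hv'g) hv2g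
          · rw [e1 t (by omega) (by omega)]
            obtain ⟨s, hs0, hs1, hveq⟩ := hv'd
            rw [hveq]
            intro hcon
            by_cases hsk : s < k - 1
            · obtain ⟨hm, hs⟩ := (Fkey hk hl1 hf1 (by omega) hsk).1 hcon
              omega
            · have hrw : (i + l1 - 1) * (k - 1) + (k - 1) = (i + l1) * (k - 1) + 0 := by
                have hq1 : (i + l1 - 1) * (k - 1) + (k - 1) = (i + l1 - 1 + 1) * (k - 1) + 0 := by
                  ring
                have hq2 : i + l1 - 1 + 1 = i + l1 := by omega
                rw [hq1, hq2]
              rw [show s = k - 1 by omega, hrw] at hcon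
              obtain ⟨hm, -⟩ := (Fkey hk hl1 hf1 (by omega) (by omega)).1 hcon
              exact not_modEq_of_lt (by omega) (by omega) hm
        · by_cases h4 : t + 1 = n - 1
          · rw [h4, e5]
            by_cases h5 : t = l1
            · rw [h5, e3]
              intro hcon
              exact Finset.disjoint_left.1 hgg hu'g (by rw [hcon]; exact hu2g)
            · rw [e4 t (by omega) (by omega)]
              obtain ⟨s, hs0, hs1, hueq⟩ := hu2d
              rw [hueq]
              intro hcon
              by_cases hsk : s < k - 1
              · obtain ⟨hm, hs⟩ := (Fkey hk hl2 hf2 (by omega) hsk).1 hcon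
                omega
              · have hrw : (j + l2 - 1) * (k - 1) + (k - 1) = (j + l2) * (k - 1) + 0 := by
                  have hq1 : (j + l2 - 1) * (k - 1) + (k - 1) = (j + l2 - 1 + 1) * (k - 1) + 0 := by
                    ring
                  have hq2 : j + l2 - 1 + 1 = j + l2 := by omega
                  rw [hq1, hq2]
                rw [show s = k - 1 by omega, hrw] at hcon
                obtain ⟨hm, -⟩ := (Fkey hk hl2 hf2 (by omega) (by omega)).1 hcon
                exact not_modEq_of_lt (by omega) (by omega) hm
          · by_cases h0 : t = 0
            · rw [h0, show (0 : ℕ) + 1 = 1 from rfl, e0, e1 1 (by omega) (by omega)]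
              obtain ⟨s, hs1, hveq⟩ := hv2d
              rw [hveq]
              intro hcon
              obtain ⟨hm, -⟩ := (Fkey hk hl1 hf1 hs1 (by omega)).1 hcon
              exact not_modEq_of_lt (by omega) (by omega) hm
            · by_cases h5 : t = l1
              · rw [h5, e3, e4 (l1 + 1) (by omega) (by omega)]
                obtain ⟨s, hs1, hueq⟩ := hu'd
                rw [hueq, show j + 1 + (l1 + 1 - l1) = j + 2 by omega]
                intro hcon
                obtain ⟨hm, -⟩ := (Fkey hk hl2 hf2 hs1 (by omega)).1 hcon
                exact not_modEq_of_lt (by omega) (by omega) hm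
              · by_cases h6 : t ≤ l1 - 2
                · rw [e1 t (by omega) h6, e1 (t + 1) (by omega) (by omega)]
                  intro hcon
                  obtain ⟨hm, -⟩ := (Fkey hk hl1 hf1 (by omega) (by omega)).1 hcon
                  exact not_modEq_of_lt (by omega) (by omega) hm
                · rw [e4 t (by omega) (by omega), e4 (t + 1) (by omega) (by omega)]
                  intro hcon
                  obtain ⟨hm, -⟩ := (Fkey hk hl2 hf2 (by omega) (by omega)).1 hcon
                  exact not_modEq_of_lt (by omega) (by omega) hm
  have key : ∀ t t', t < t' → t' < n →
      Disjoint (S t \ {α ((t + 1) % n)}) (S t' \ {α ((t' + 1) % n)}) := by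
    intro t t' htt ht'
    rw [Finset.disjoint_left]
    rintro x hx hx'
    rw [Finset.mem_sdiff, Finset.mem_singleton] at hx hx'
    obtain ⟨hx1, hx2⟩ := hx
    obtain ⟨hx1', hx2'⟩ := hx'
    rw [Nat.mod_eq_of_lt (show t + 1 < n by omega)] at hx2
    by_cases hb4 : t' = n - 1
    · rw [hb4, s4] at hx1'
      rw [hb4, show n - 1 + 1 = n by omega, Nat.mod_self, e0] at hx2'
      by_cases ha2 : t = l1 - 1
      · rw [ha2, s2] at hx1
        exact Finset.disjoint_left.1 hgg hx1 hx1'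
      · rw [hg2mem x] at hx1'
        by_cases ha1 : t ≤ l1 - 2
        · rw [s1 t ha1, hCE1] at hx1
          rcases hx1' with rfl | hxe | hxw | rfl | hxf
          · exact hx2' rfl
          · exact not_modEq_of_lt (by omega) (by omega) (hxE2 x hxe _ hx1)
          · exact (hW2d x hxw).1 (mem_range_of_mem_cycEdge hx1)
          · exact hr12 (mem_range_of_mem_cycEdge hx1) hRu2
          · exact hr12 (mem_range_of_mem_cycEdge hx1) (hRF2 x hxf)
        · rw [s3 t (by omega) (by omega), hCE2] at hx1
          rcases hx1' with rfl | hxe | hxw | rfl | hxf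
          · exact hx2' rfl
          · exact hr12 (hRE2 x hxe) (mem_range_of_mem_cycEdge hx1)
          · exact (hW2d x hxw).2 (mem_range_of_mem_cycEdge hx1)
          · by_cases hc : t = n - 2
            · rw [hc, show n - 2 + 1 = n - 1 by omega, e5] at hx2
              exact hx2 rfl
            · refine hxu2 _ ?_ ?_ hx1
              · exact not_modEq_symm (not_modEq_of_lt (by omega) (by omega))
              · exact not_modEq_symm (not_modEq_of_lt (by omega) (by omega))
          · exact not_modEq_of_lt (by omega) (by omega) (hxF2 x hxf _ hx1)
    · rw [Nat.mod_eq_of_lt (show t' + 1 < n by omega)] at hx2'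
      by_cases hb2 : t' = l1 - 1
      · rw [hb2, s2] at hx1'
        rw [hb2, show l1 - 1 + 1 = l1 by omega, e3] at hx2'
        have ha1 : t ≤ l1 - 2 := by omega
        rw [s1 t ha1, hCE1] at hx1
        rw [hgmem x] at hx1'
        rcases hx1' with rfl | hxe | hxw | rfl | hxf
        · by_cases hc : t = l1 - 2
          · rw [hc, show l1 - 2 + 1 = l1 - 1 by omega, e2] at hx2
            exact hx2 rfl
          · refine hxv' _ ?_ ?_ hx1
            · exact not_modEq_symm (not_modEq_of_lt (by omega) (by omega))
            · exact not_modEq_symm (not_modEq_of_lt (by omega) (by omega))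
        · exact not_modEq_of_lt (by omega) (by omega) (hxE1 x hxe _ hx1)
        · exact (hW1d x hxw).1 (mem_range_of_mem_cycEdge hx1)
        · exact hx2' rfl
        · exact hr12 (mem_range_of_mem_cycEdge hx1) (hRF1 x hxf)
      · by_cases hb1 : t' ≤ l1 - 2
        · have ha1 : t ≤ l1 - 2 := by omega
          rw [s1 t ha1, hCE1] at hx1
          rw [s1 t' hb1, hCE1] at hx1'
          have hmne : ¬ (i + 1 + t) ≡ (i + 1 + t') [MOD l1] :=
            not_modEq_of_lt (by omega) (by omega)
          rcases cycEdge_inter hk hl1 hf1 hmne hx1 hx1' with ⟨hxeq, hmod⟩ | ⟨hxeq, hmod⟩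
          · have ht'eq : t' = t + 1 := by
              have := modEq_eq hmod (by omega) (by omega)
              omega
            rw [e1 (t + 1) (by omega) (by omega)] at hx2
            apply hx2
            have harg : (i + 1 + t + 1) * (k - 1) + 0 = (i + 1 + (t + 1)) * (k - 1) + 0 := by
              have hq : i + 1 + t + 1 = i + 1 + (t + 1) := by omega
              rw [hq]
            rw [hxeq, harg]
          · exact not_modEq_of_lt (by omega) (by omega) hmod.symm
        · rw [s3 t' (by omega) (by omega), hCE2] at hx1'
          by_cases ha1 : t ≤ l1 - 2
          · rw [s1 t ha1, hCE1] at hx1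
            exact hr12 (mem_range_of_mem_cycEdge hx1) (mem_range_of_mem_cycEdge hx1')
          · by_cases ha2 : t = l1 - 1
            · rw [ha2, s2] at hx1
              rw [ha2, show l1 - 1 + 1 = l1 by omega, e3] at hx2
              rw [hgmem x] at hx1
              rcases hx1 with rfl | hxe | hxw | rfl | hxf
              · exact hr12 hRv' (mem_range_of_mem_cycEdge hx1')
              · exact hr12 (hRE1 x hxe) (mem_range_of_mem_cycEdge hx1')
              · exact (hW1d x hxw).2 (mem_range_of_mem_cycEdge hx1')
              · exact hx2 rfl
              · exact not_modEq_of_lt (by omega) (by omega) (hxF1 x hxf _ hx1')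
            · rw [s3 t (by omega) (by omega), hCE2] at hx1
              have hmne : ¬ (j + 1 + (t - l1)) ≡ (j + 1 + (t' - l1)) [MOD l2] :=
                not_modEq_of_lt (by omega) (by omega)
              rcases cycEdge_inter hk hl2 hf2 hmne hx1 hx1' with ⟨hxeq, hmod⟩ | ⟨hxeq, hmod⟩
              · have ht'eq : t' = t + 1 := by
                  have := modEq_eq hmod (by omega) (by omega)
                  omega
                rw [e4 (t + 1) (by omega) (by omega)] at hx2
                apply hx2
                have harg : (j + 1 + (t - l1) + 1) * (k - 1) + 0 =
                    (j + 1 + (t + 1 - l1)) * (k - 1) + 0 := by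
                  have hq : j + 1 + (t - l1) + 1 = j + 1 + (t + 1 - l1) := by omega
                  rw [hq]
                rw [hxeq, harg]
              · exact not_modEq_of_lt (by omega) (by omega) hmod.symm
  have hD : ∀ t < n, ∀ t' < n, t ≠ t' →
      Disjoint (S t \ {α ((t + 1) % n)}) (S t' \ {α ((t' + 1) % n)}) := by
    intro t ht t' ht' hne'
    rcases Nat.lt_or_ge t t' with h | h
    · exact key t t' h ht'
    · exact (key t' t (by omega) ht).symm
  have hbuild := build_loose_cycle k n hk (by omega) S α hcard hαmem hα'mem hnee hD
  refine ⟨cycFun k n S α, hbuild.1, ?_⟩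
  intro t ht
  rw [hbuild.2 t ht]
  by_cases h1 : t ≤ l1 - 2
  · right; right; left
    refine ⟨(i + 1 + t) % l1, Nat.mod_lt _ (by omega), ?_, s1 t h1⟩
    intro hcon
    have hmm : i + 1 + t ≡ i [MOD l1] := by
      show (i + 1 + t) % l1 = i % l1
      rw [Nat.mod_eq_of_lt hi]
      exact hcon
    exact not_modEq_of_lt (by omega) (by omega) hmm.symm
  · by_cases h2 : t = l1 - 1
    · left
      rw [h2]
      exact s2
    · by_cases h3 : t ≤ n - 2
      · right; right; right
        refine ⟨(j + 1 + (t - l1)) % l2, Nat.mod_lt _ (by omega), ?_, s3 t (by omega) h3⟩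
        intro hcon
        have hmm : j + 1 + (t - l1) ≡ j [MOD l2] := by
          show (j + 1 + (t - l1)) % l2 = j % l2
          rw [Nat.mod_eq_of_lt hj]
          exact hcon
        exact not_modEq_of_lt (by omega) (by omega) hmm.symm
      · right; left
        rw [show t = n - 1 by omega]
        exact s4



/-- Two vertex-disjoint loose cycles together with two disjoint connecting
edges of types `A` and `B` form a loose cycle with `l₁ + l₂` edges; consequently, if the
cycles are blue and there is no blue `C^k_{l₁+l₂}`, there are no two disjoint blue
connecting edges of types `A` and `B`. -/
theorem connecting_edges_join_cycles {V : Type} [DecidableEq V] (k l1 l2 : ℕ)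
    (hk : 3 ≤ k) (hl1 : 2 ≤ l1) (hl2 : 2 ≤ l2) (c : Finset V → Bool)
    (f1 : ZMod (l1 * (k - 1)) → V) (f2 : ZMod (l2 * (k - 1)) → V)
    (hf1 : Function.Injective f1) (hf2 : Function.Injective f2)
    (hdisj : Disjoint (Set.range f1) (Set.range f2))
    (i j : ℕ) (hi : i < l1) (hj : j < l2) :
    (∀ g g' : Finset V, ConnectA k l1 l2 f1 f2 i j g → ConnectB k l1 l2 f1 f2 i j g' →
        Disjoint g g' →
        ∃ h : ZMod ((l1 + l2) * (k - 1)) → V, Function.Injective h ∧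
          ∀ t < l1 + l2,
            cycEdge k (l1 + l2) h t = g ∨ cycEdge k (l1 + l2) h t = g' ∨
            (∃ i' < l1, i' ≠ i ∧ cycEdge k (l1 + l2) h t = cycEdge k l1 f1 i') ∨
            (∃ j' < l2, j' ≠ j ∧ cycEdge k (l1 + l2) h t = cycEdge k l2 f2 j')) ∧
    ((∀ i' < l1, c (cycEdge k l1 f1 i') = false) →
     (∀ j' < l2, c (cycEdge k l2 f2 j') = false) →
     ¬ HasLooseCycle k (l1 + l2) (fun e => c e = false) →
     ¬ ∃ g g' : Finset V, ConnectA k l1 l2 f1 f2 i j g ∧ ConnectB k l1 l2 f1 f2 i j g' ∧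
         Disjoint g g' ∧ c g = false ∧ c g' = false) := by
  constructor
  · intro g g' hA hB hdj
    exact join_app k l1 l2 hk hl1 hl2 f1 f2 hf1 hf2 hdisj i j hi hj g g' hA hB hdj
  · intro hc1 hc2 hno hex
    obtain ⟨g, g', hA, hB, hdj, hcg, hcg'⟩ := hex
    apply hno
    obtain ⟨h, hinj, hedges⟩ :=
      join_app k l1 l2 hk hl1 hl2 f1 f2 hf1 hf2 hdisj i j hi hj g g' hA hB hdj
    refine ⟨h, hinj, ?_⟩
    intro t ht
    rcases hedges t ht with he | he | ⟨i', hi', hne', he⟩ | ⟨j', hj', hne', he⟩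
    · show c _ = false
      rw [he]
      exact hcg
    · show c _ = false
      rw [he]
      exact hcg'
    · show c _ = false
      rw [he]
      exact hc1 i' hi'
    · show c _ = false
      rw [he]
      exact hc2 j' hj'
end

section
/- For every k ≥ 3 and n ≥ m ≥ 3, the Ramsey number R(P^k_n, P^k_m) ≥ (k-1)n + ⌊(m+1)/2⌋: there is a 2-coloring of the complete k-uniform hypergraph on (k-1)n + ⌊(m+1)/2⌋ - 1 vertices with no red loose path P^k_n and no blue loose path P^k_m. -/
open Finset

/-- For `k ≥ 3` and `n ≥ m ≥ 3`, `R(P^k_n, P^k_m) ≥ (k-1)n + ⌊(m+1)/2⌋`: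
there is a 2-colouring of `K^k_{(k-1)n + ⌊(m+1)/2⌋ - 1}` with no red `P^k_n` and no blue
`P^k_m`. -/
theorem ramsey_loose_path_lower_bound (k n m : ℕ) (hk : 3 ≤ k) (hm : 3 ≤ m) (hnm : m ≤ n) :
    ∃ c : Finset (Fin ((k - 1) * n + (m + 1) / 2 - 1)) → Bool,
      ¬ HasLoosePath k n (fun e => c e = true) ∧
      ¬ HasLoosePath k m (fun e => c e = false) := by
  classical
  obtain ⟨K, rfl⟩ : ∃ K, k = K + 1 := ⟨k - 1, by omega⟩
  try simp only [Nat.add_sub_cancel]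
  have hK : 2 ≤ K := by omega
  set N := K * n + (m + 1) / 2 - 1 with hN
  have hN2 : (m+1)/2 ≥ 2 := by omega
  have hNval : N = K * n + ((m + 1) / 2 - 1) := by omega
  refine ⟨fun e => decide (∀ v ∈ e, v.val < K*n), ?_, ?_⟩
  · rintro ⟨f, hinj, hed⟩
    try simp only [Nat.add_sub_cancel] at hinj hed
    have hA : ∀ j ≤ n * K, (f j).val < K*n := by
      intro j hj
      obtain ⟨i, t, hi, ht, hjeq⟩ : ∃ i t, i < n ∧ t < K + 1 ∧ j = i * K + t := by
        rcases lt_or_eq_of_le hj with h | h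
        · refine ⟨j / K, j % K, (Nat.div_lt_iff_lt_mul (by omega)).mpr (by omega),
            by have := Nat.mod_lt j (y := K) (by omega); omega, ?_⟩
          have := Nat.div_add_mod j K
          have : j / K * K = K * (j / K) := Nat.mul_comm _ _
          omega
        · refine ⟨n - 1, K, by omega, by omega, ?_⟩
          have : (n-1)*K + K = n * K := by
            have h1 : 1 ≤ n := by omega
            have := Nat.sub_mul n 1 K
            have := Nat.mul_le_mul_right K h1
            omega
          omega
      have he := hed i hi
      simp only [decide_eq_true_eq] at he
      exact he (f j) (by
        simp only [pathEdge, Nat.add_sub_cancel, Finset.mem_image, Finset.mem_range]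
        exact ⟨t, ht, by rw [hjeq]⟩)
    have hsub : (Finset.Iic (n*K)).image (fun j => (f j).val) ⊆
        Finset.range (K*n) := by
      intro x hx
      simp only [Finset.mem_image, Finset.mem_Iic] at hx
      obtain ⟨j, hj, rfl⟩ := hx
      exact Finset.mem_range.mpr (hA j hj)
    have hcard := Finset.card_le_card hsub
    rw [Finset.card_image_of_injOn (fun a ha b hb hab => by
      apply hinj (Finset.mem_Iic.mp ha) (Finset.mem_Iic.mp hb)
      exact Fin.val_injective hab)] at hcard
    simp [Finset.card_range, Nat.card_Iic] at hcard
    have : n * K = K * n := Nat.mul_comm _ _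
    omega
  · rintro ⟨f, hinj, hed⟩
    try simp only [Nat.add_sub_cancel] at hinj hed
    have hx : ∀ i, ∃ j, i * K ≤ j ∧ j < i * K + (K + 1) ∧
        (i < m → K*n ≤ (f j).val) := by
      intro i
      by_cases hi : i < m
      · have he := hed i hi
        simp only [decide_eq_false_iff_not, not_forall] at he
        obtain ⟨v, hv, hv2⟩ := he
        simp only [pathEdge, Nat.add_sub_cancel, Finset.mem_image, Finset.mem_range] at hv
        obtain ⟨t, ht, rfl⟩ := hv
        exact ⟨i*K+t, by omega, by omega, fun _ => by omega⟩
      · exact ⟨i*K, le_refl _, by omega, fun h => absurd h hi⟩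
    choose j hj1 hj2 hj3 using hx
    have hjle : ∀ i < m, j i ≤ m * K := by
      intro i hi
      have h2 := hj2 i
      have h1 : (i+1) * K ≤ m * K := Nat.mul_le_mul_right _ (by omega)
      have h3 : (i+1) * K = i * K + K := by ring
      omega
    have hfib : ∀ b ∈ (Finset.range m).image (fun i => f (j i)),
        ((Finset.range m).filter (fun i => f (j i) = b)).card ≤ 2 := by
      intro b hb
      set F := (Finset.range m).filter (fun i => f (j i) = b) with hF
      have hstep : ∀ i ∈ F, ∀ i' ∈ F, i < i' → i' = i + 1 := by
        intro i hi i' hi' hlt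
        simp only [hF, Finset.mem_filter, Finset.mem_range] at hi hi'
        have heq : j i = j i' := by
          apply hinj (Set.mem_Iic.mpr (hjle i hi.1)) (Set.mem_Iic.mpr (hjle i' hi'.1))
          rw [hi.2, hi'.2]
        have h1 := hj1 i'
        have h2 := hj2 i
        by_contra hne
        have h4 : i + 2 ≤ i' := by omega
        have h5 : (i+2) * K ≤ i' * K := Nat.mul_le_mul_right _ h4
        have h6 : (i+2) * K = i * K + 2 * K := by ring
        omega
      rcases F.eq_empty_or_nonempty with hFe | hFne
      · simp [hFe]
      · set i0 := F.min' hFne with hi0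
        have hsub : F ⊆ Finset.Icc i0 (i0+1) := by
          intro i hi
          rw [Finset.mem_Icc]
          refine ⟨F.min'_le i hi, ?_⟩
          rcases lt_or_ge i0 i with h | h
          · rw [hstep i0 (F.min'_mem hFne) i hi h]
          · omega
        calc F.card ≤ (Finset.Icc i0 (i0+1)).card := Finset.card_le_card hsub
          _ = 2 := by rw [Nat.card_Icc]; omega
    have hcount := Finset.card_le_mul_card_image (f := fun i => f (j i))
      (Finset.range m) 2 hfib
    rw [Finset.card_range] at hcount
    have himg : ((Finset.range m).image (fun i => f (j i))).card ≤ (m+1)/2 - 1 := by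
      have hsub : ((Finset.range m).image (fun i => f (j i))).image Fin.val ⊆
          Finset.Ico (K*n) N := by
        intro x hx
        simp only [Finset.mem_image, Finset.mem_range] at hx
        obtain ⟨v, ⟨i, hi, rfl⟩, rfl⟩ := hx
        exact Finset.mem_Ico.mpr ⟨hj3 i hi, (f (j i)).isLt⟩
      have := Finset.card_le_card hsub
      rw [Finset.card_image_of_injective _ Fin.val_injective, Nat.card_Ico] at this
      omega
    omega
end

section
/- Let k ≥ 8, n ≡ 0 (mod 4), n ≥ 8, and suppose the complete k-uniform hypergraph on (k-1)n + ⌊(n-1)/2⌋ vertices is 2-colored with no monochromatic C^k_n. Then there exist two vertex-disjoint monochromatic copies of C^k_{n/2} of the same color, assuming R(C^k_{n/2}, C^k_{n/2}) = (k-1)(n/2) + ⌊(n/2 - 1)/2⌋. -/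
open Finset

lemma cycEdge_comp {k n : ℕ} {V W : Type} [DecidableEq V] [DecidableEq W]
    (g : V → W) (f : ZMod (n * (k - 1)) → V) (i : ℕ) :
    cycEdge k n (g ∘ f) i = (cycEdge k n f i).image g := by
  unfold cycEdge
  rw [Finset.image_image]
  rfl

lemma arrow_subset {k m NN R : ℕ} (hA : cycCycArrow k m m R)
    (c : Finset (Fin NN) → Bool) (S : Finset (Fin NN)) (hS : S.card = R) :
    ∃ (b : Bool) (f : ZMod (m * (k - 1)) → Fin NN),
      IsLooseCycle k m (fun e => c e = b) f ∧ ∀ z, f z ∈ S := by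
  classical
  let g : Fin R → Fin NN := fun i => ((S.orderIsoOfFin hS) i : Fin NN)
  have hg : Function.Injective g := by
    intro a b hab
    exact (S.orderIsoOfFin hS).injective (Subtype.ext hab)
  have hgS : ∀ i, g i ∈ S := fun i => ((S.orderIsoOfFin hS) i).2
  rcases hA (fun e => c (e.image g)) with h | h
  · obtain ⟨f₀, h₀⟩ := h
    refine ⟨true, g ∘ f₀, ⟨hg.comp h₀.1, ?_⟩, fun z => hgS _⟩
    intro i hi
    rw [cycEdge_comp]
    exact h₀.2 i hi
  · obtain ⟨f₀, h₀⟩ := h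
    refine ⟨false, g ∘ f₀, ⟨hg.comp h₀.1, ?_⟩, fun z => hgS _⟩
    intro i hi
    rw [cycEdge_comp]
    exact h₀.2 i hi

set_option maxHeartbeats 2000000 in
/-- `k ≥ 8`, `n ≡ 0 (mod 4)`, `n ≥ 8`: if `K^k_{(k-1)n + ⌊(n-1)/2⌋}` is
2-coloured with no monochromatic `C^k_n`, then (given the Ramsey value for `C^k_{n/2}`)
there are two vertex-disjoint monochromatic copies of `C^k_{n/2}` of the same colour. -/
theorem two_disjoint_isochromatic_half_cycles (k n : ℕ) (hk : 8 ≤ k) (hn : 8 ≤ n)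
    (h4 : n % 4 = 0) (c : Finset (Fin ((k - 1) * n + (n - 1) / 2)) → Bool)
    (hnored : ¬ HasLooseCycle k n (fun e => c e = true))
    (hnoblue : ¬ HasLooseCycle k n (fun e => c e = false))
    (hR : cycCycRamsey k (n / 2) (n / 2) ((k - 1) * (n / 2) + (n / 2 - 1) / 2)) :
    ∃ f1 f2 : ZMod ((n / 2) * (k - 1)) → Fin ((k - 1) * n + (n - 1) / 2),
      Disjoint (Set.range f1) (Set.range f2) ∧
      ((IsLooseCycle k (n / 2) (fun e => c e = true) f1 ∧
        IsLooseCycle k (n / 2) (fun e => c e = true) f2) ∨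
       (IsLooseCycle k (n / 2) (fun e => c e = false) f1 ∧
        IsLooseCycle k (n / 2) (fun e => c e = false) f2)) := by
  classical
  obtain ⟨q, hq⟩ : ∃ q, n = 4 * q := ⟨n / 4, by omega⟩
  have hq2 : 2 ≤ q := by omega
  have hn2 : n / 2 = 2 * q := by omega
  have hn1 : (n - 1) / 2 = 2 * q - 1 := by omega
  have hm1 : (n / 2 - 1) / 2 = q - 1 := by rw [hn2]; omega
  obtain ⟨V, hV⟩ : ∃ V, (n / 2) * (k - 1) = V := ⟨_, rfl⟩
  have hVbig : 14 * q ≤ V := by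
    rw [← hV, hn2]
    calc 14 * q = 2 * q * 7 := by ring
      _ ≤ 2 * q * (k - 1) := Nat.mul_le_mul_left _ (by omega)
  have hRA : (k - 1) * (n / 2) + (n / 2 - 1) / 2 = V + (q - 1) := by
    rw [hm1, ← hV, Nat.mul_comm]
  have hNV : (k - 1) * n + (n - 1) / 2 = 2 * V + (2 * q - 1) := by
    have h2 : (k - 1) * n = 2 * V := by
      rw [← hV, hn2, hq]; ring
    rw [h2, hn1]
  haveI : NeZero (n / 2 * (k - 1)) := ⟨by rw [hV]; omega⟩
  -- card of the image of an injective cycle map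
  have himg : ∀ f : ZMod (n / 2 * (k - 1)) → Fin ((k - 1) * n + (n - 1) / 2),
      Function.Injective f → (Finset.univ.image f).card = V := by
    intro f hf
    rw [Finset.card_image_of_injective _ hf, Finset.card_univ, ZMod.card, hV]
  -- disjointness helper
  have mkDisj : ∀ (f g : ZMod (n / 2 * (k - 1)) → Fin ((k - 1) * n + (n - 1) / 2))
      (T : Finset (Fin ((k - 1) * n + (n - 1) / 2))),
      (∀ z, g z ∈ T) → (∀ a ∈ T, a ∉ Finset.univ.image f) →
      Disjoint (Set.range f) (Set.range g) := by
    intro f g T hgT hT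
    rw [Set.disjoint_left]
    rintro a ⟨w, rfl⟩ hag
    obtain ⟨z, hz⟩ := hag
    have h1 : f w ∈ T := by rw [← hz]; exact hgT z
    exact hT _ h1 (Finset.mem_image_of_mem f (Finset.mem_univ w))
  -- packaging a same-coloured disjoint pair into the goal
  have pairGoal : ∀ (β : Bool) (g1 g2 : ZMod (n / 2 * (k - 1)) → Fin ((k - 1) * n + (n - 1) / 2)),
      IsLooseCycle k (n / 2) (fun e => c e = β) g1 →
      IsLooseCycle k (n / 2) (fun e => c e = β) g2 →
      Disjoint (Set.range g1) (Set.range g2) →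
      (∃ f1 f2 : ZMod ((n / 2) * (k - 1)) → Fin ((k - 1) * n + (n - 1) / 2),
        Disjoint (Set.range f1) (Set.range f2) ∧
        ((IsLooseCycle k (n / 2) (fun e => c e = true) f1 ∧
          IsLooseCycle k (n / 2) (fun e => c e = true) f2) ∨
         (IsLooseCycle k (n / 2) (fun e => c e = false) f1 ∧
          IsLooseCycle k (n / 2) (fun e => c e = false) f2))) := by
    intro β g1 g2 h1 h2 hd
    cases β
    · exact ⟨g1, g2, hd, Or.inr ⟨h1, h2⟩⟩
    · exact ⟨g1, g2, hd, Or.inl ⟨h1, h2⟩⟩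
  -- the terminal case: the two cycles overlap a lot
  have final : ∀ (b : Bool) (fB fρ : ZMod (n / 2 * (k - 1)) → Fin ((k - 1) * n + (n - 1) / 2)),
      IsLooseCycle k (n / 2) (fun e => c e = !b) fB →
      IsLooseCycle k (n / 2) (fun e => c e = b) fρ →
      ((Finset.univ.image fB) \ (Finset.univ.image fρ)).card < q →
      (∃ f1 f2 : ZMod ((n / 2) * (k - 1)) → Fin ((k - 1) * n + (n - 1) / 2),
        Disjoint (Set.range f1) (Set.range f2) ∧
        ((IsLooseCycle k (n / 2) (fun e => c e = true) f1 ∧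
          IsLooseCycle k (n / 2) (fun e => c e = true) f2) ∨
         (IsLooseCycle k (n / 2) (fun e => c e = false) f1 ∧
          IsLooseCycle k (n / 2) (fun e => c e = false) f2))) := by
    intro b fB fρ hB hρ hsm
    have hcB := himg fB hB.1
    have hcρ := himg fρ hρ.1
    have hU : ((Finset.univ.image fρ) ∪ (Finset.univ.image fB)).card ≤ V + (q - 1) := by
      rw [Finset.union_comm, ← Finset.card_sdiff_add_card]
      omega
    have hTcard : (k - 1) * (n / 2) + (n / 2 - 1) / 2 ≤
        (Finset.univ \ ((Finset.univ.image fρ) ∪ (Finset.univ.image fB))).card := by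
      rw [Finset.card_sdiff_of_subset (Finset.subset_univ _), Finset.card_univ, Fintype.card_fin]
      omega
    obtain ⟨S, hSsub, hScard⟩ := Finset.exists_subset_card_eq hTcard
    obtain ⟨b', fD, hD, hDS⟩ := arrow_subset hR.1 c S hScard
    have hDT : ∀ z, fD z ∈ Finset.univ \ ((Finset.univ.image fρ) ∪ (Finset.univ.image fB)) :=
      fun z => hSsub (hDS z)
    by_cases hb : b' = b
    · subst hb
      refine pairGoal b' fρ fD hρ hD (mkDisj fρ fD _ hDT ?_)
      intro a ha h
      exact (Finset.mem_sdiff.mp ha).2 (Finset.mem_union_left _ h)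
    · have hb2 : b' = !b := by cases b <;> cases b' <;> revert hb <;> decide
      rw [hb2] at hD
      refine pairGoal (!b) fB fD hB hD (mkDisj fB fD _ hDT ?_)
      intro a ha h
      exact (Finset.mem_sdiff.mp ha).2 (Finset.mem_union_right _ h)
  -- the drift induction
  have drift : ∀ j : ℕ, ∀ (b : Bool)
      (fB fρ : ZMod (n / 2 * (k - 1)) → Fin ((k - 1) * n + (n - 1) / 2)),
      IsLooseCycle k (n / 2) (fun e => c e = !b) fB →
      IsLooseCycle k (n / 2) (fun e => c e = b) fρ →
      ((Finset.univ.image fB) \ (Finset.univ.image fρ)).card ≤ j →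
      (∃ f1 f2 : ZMod ((n / 2) * (k - 1)) → Fin ((k - 1) * n + (n - 1) / 2),
        Disjoint (Set.range f1) (Set.range f2) ∧
        ((IsLooseCycle k (n / 2) (fun e => c e = true) f1 ∧
          IsLooseCycle k (n / 2) (fun e => c e = true) f2) ∨
         (IsLooseCycle k (n / 2) (fun e => c e = false) f1 ∧
          IsLooseCycle k (n / 2) (fun e => c e = false) f2))) := by
    intro j
    induction j with
    | zero =>
      intro b fB fρ hB hρ hle
      exact final b fB fρ hB hρ (by omega)
    | succ j ih =>
      intro b fB fρ hB hρ hle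
      by_cases hsm : ((Finset.univ.image fB) \ (Finset.univ.image fρ)).card < q
      · exact final b fB fρ hB hρ hsm
      · have hcB := himg fB hB.1
        have hcρ := himg fρ hρ.1
        have hEq1 := Finset.card_sdiff_add_card_inter (Finset.univ.image fρ) (Finset.univ.image fB)
        have hEq2 := Finset.card_sdiff_add_card_inter (Finset.univ.image fB) (Finset.univ.image fρ)
        rw [Finset.inter_comm] at hEq2
        have hpos : 0 < ((Finset.univ.image fρ) \ (Finset.univ.image fB)).card := by omega
        obtain ⟨x, hx⟩ := Finset.card_pos.mp hpos
        have hxρ : x ∈ Finset.univ.image fρ := (Finset.mem_sdiff.mp hx).1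
        have hxB : x ∉ Finset.univ.image fB := (Finset.mem_sdiff.mp hx).2
        obtain ⟨Z, hZsub, hZcard⟩ := Finset.exists_subset_card_eq
          (show q ≤ ((Finset.univ.image fB) \ (Finset.univ.image fρ)).card by omega)
        have hZρ : ∀ a ∈ Z, a ∉ Finset.univ.image fρ :=
          fun a ha => (Finset.mem_sdiff.mp (hZsub ha)).2
        have hZB : ∀ a ∈ Z, a ∈ Finset.univ.image fB :=
          fun a ha => (Finset.mem_sdiff.mp (hZsub ha)).1
        have hdisjZ : Disjoint ((Finset.univ.image fρ).erase x) Z := by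
          rw [Finset.disjoint_right]
          intro a haZ haE
          exact hZρ a haZ (Finset.mem_of_mem_erase haE)
        have hScard : (((Finset.univ.image fρ).erase x) ∪ Z).card =
            (k - 1) * (n / 2) + (n / 2 - 1) / 2 := by
          rw [Finset.card_union_of_disjoint hdisjZ, Finset.card_erase_of_mem hxρ, hZcard]
          omega
        obtain ⟨b₁, fC, hC, hCS⟩ := arrow_subset hR.1 c _ hScard
        have hcC := himg fC hC.1
        have hCsub : Finset.univ.image fC ⊆ ((Finset.univ.image fρ).erase x) ∪ Z := by
          intro a ha
          obtain ⟨z, _, rfl⟩ := Finset.mem_image.mp ha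
          exact hCS z
        by_cases hb : b₁ = b
        · subst hb
          refine ih b₁ fB fC hB hC ?_
          -- cardinality bookkeeping: |B \ C| < |B \ ρ|
          have hsub1 : (((Finset.univ.image fρ).erase x) ∪ Z) ∩ (Finset.univ.image fB) ⊆
              ((Finset.univ.image fC) ∩ (Finset.univ.image fB)) ∪
              ((((Finset.univ.image fρ).erase x) ∪ Z) \ (Finset.univ.image fC)) := by
            intro a ha
            by_cases h : a ∈ Finset.univ.image fC
            · exact Finset.mem_union_left _ (Finset.mem_inter.mpr ⟨h, (Finset.mem_inter.mp ha).2⟩)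
            · exact Finset.mem_union_right _ (Finset.mem_sdiff.mpr ⟨(Finset.mem_inter.mp ha).1, h⟩)
          have hsub2 : ((Finset.univ.image fρ) ∩ (Finset.univ.image fB)) ∪ Z ⊆
              (((Finset.univ.image fρ).erase x) ∪ Z) ∩ (Finset.univ.image fB) := by
            intro a ha
            rcases Finset.mem_union.mp ha with h | h
            · have h1 := (Finset.mem_inter.mp h).1
              have h2 := (Finset.mem_inter.mp h).2
              refine Finset.mem_inter.mpr ⟨Finset.mem_union_left _ (Finset.mem_erase.mpr ⟨?_, h1⟩), h2⟩
              rintro rfl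
              exact hxB h2
            · exact Finset.mem_inter.mpr ⟨Finset.mem_union_right _ h, hZB a h⟩
          have hdj2 : Disjoint ((Finset.univ.image fρ) ∩ (Finset.univ.image fB)) Z := by
            rw [Finset.disjoint_right]
            intro a haZ haI
            exact hZρ a haZ (Finset.mem_inter.mp haI).1
          have c1 : ((Finset.univ.image fρ) ∩ (Finset.univ.image fB)).card + q ≤
              ((((Finset.univ.image fρ).erase x) ∪ Z) ∩ (Finset.univ.image fB)).card := by
            rw [← hZcard, ← Finset.card_union_of_disjoint hdj2]
            exact Finset.card_le_card hsub2
          have c2 := Finset.card_le_card hsub1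
          have c3 := Finset.card_union_le ((Finset.univ.image fC) ∩ (Finset.univ.image fB))
            ((((Finset.univ.image fρ).erase x) ∪ Z) \ (Finset.univ.image fC))
          have c4 : ((((Finset.univ.image fρ).erase x) ∪ Z) \ (Finset.univ.image fC)).card =
              (((Finset.univ.image fρ).erase x) ∪ Z).card - (Finset.univ.image fC).card :=
            Finset.card_sdiff_of_subset hCsub
          have hScard' : (((Finset.univ.image fρ).erase x) ∪ Z).card = V + (q - 1) := by
            rw [hScard, hRA]
          have hEq3 := Finset.card_sdiff_add_card_inter (Finset.univ.image fB) (Finset.univ.image fC)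
          rw [Finset.inter_comm] at hEq3
          omega
        · have hb2 : b₁ = !b := by cases b <;> cases b₁ <;> revert hb <;> decide
          rw [hb2] at hC
          have hCZ : Finset.univ.image fC ⊆ (Finset.univ.image fρ) ∪ Z := by
            intro a ha
            rcases Finset.mem_union.mp (hCsub ha) with h | h
            · exact Finset.mem_union_left _ (Finset.mem_of_mem_erase h)
            · exact Finset.mem_union_right _ h
          have hUC : ((Finset.univ.image fρ) ∪ (Finset.univ.image fC)).card ≤ V + q := by
            calc ((Finset.univ.image fρ) ∪ (Finset.univ.image fC)).card
                ≤ ((Finset.univ.image fρ) ∪ Z).card :=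
                  Finset.card_le_card (Finset.union_subset Finset.subset_union_left hCZ)
              _ ≤ (Finset.univ.image fρ).card + Z.card := Finset.card_union_le _ _
              _ = V + q := by rw [hcρ, hZcard]
          have hTcard : (k - 1) * (n / 2) + (n / 2 - 1) / 2 ≤
              (Finset.univ \ ((Finset.univ.image fρ) ∪ (Finset.univ.image fC))).card := by
            rw [Finset.card_sdiff_of_subset (Finset.subset_univ _), Finset.card_univ, Fintype.card_fin]
            omega
          obtain ⟨S₂, hS₂sub, hS₂card⟩ := Finset.exists_subset_card_eq hTcard
          obtain ⟨b₂, fD, hD, hDS⟩ := arrow_subset hR.1 c S₂ hS₂card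
          have hDT : ∀ z, fD z ∈
              Finset.univ \ ((Finset.univ.image fρ) ∪ (Finset.univ.image fC)) :=
            fun z => hS₂sub (hDS z)
          by_cases hb₂ : b₂ = b
          · subst hb₂
            refine pairGoal b₂ fρ fD hρ hD (mkDisj fρ fD _ hDT ?_)
            intro a ha h
            exact (Finset.mem_sdiff.mp ha).2 (Finset.mem_union_left _ h)
          · have hb₂2 : b₂ = !b := by cases b <;> cases b₂ <;> revert hb₂ <;> decide
            rw [hb₂2] at hD
            refine pairGoal (!b) fC fD hC hD (mkDisj fC fD _ hDT ?_)
            intro a ha h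
            exact (Finset.mem_sdiff.mp ha).2 (Finset.mem_union_right _ h)
  -- kick-off: find two disjoint monochromatic half-cycles (possibly of different colours)
  have hUcard : (Finset.univ : Finset (Fin ((k - 1) * n + (n - 1) / 2))).card =
      2 * V + (2 * q - 1) := by
    rw [Finset.card_univ, Fintype.card_fin, hNV]
  obtain ⟨S₀, hS₀sub, hS₀card⟩ := Finset.exists_subset_card_eq
    (show (k - 1) * (n / 2) + (n / 2 - 1) / 2 ≤
      (Finset.univ : Finset (Fin ((k - 1) * n + (n - 1) / 2))).card by rw [hUcard]; omega)
  obtain ⟨b₁, fC1, hC1, _⟩ := arrow_subset hR.1 c S₀ hS₀card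
  have hc1 := himg fC1 hC1.1
  have hT1card : (k - 1) * (n / 2) + (n / 2 - 1) / 2 ≤
      (Finset.univ \ (Finset.univ.image fC1)).card := by
    rw [Finset.card_sdiff_of_subset (Finset.subset_univ _), Finset.card_univ, Fintype.card_fin]
    omega
  obtain ⟨S₁, hS₁sub, hS₁card⟩ := Finset.exists_subset_card_eq hT1card
  obtain ⟨b₂, fC2, hC2, hC2S⟩ := arrow_subset hR.1 c S₁ hS₁card
  have hC2T : ∀ z, fC2 z ∈ Finset.univ \ (Finset.univ.image fC1) := fun z => hS₁sub (hC2S z)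
  by_cases hbb : b₂ = b₁
  · subst hbb
    refine pairGoal b₂ fC1 fC2 hC1 hC2 (mkDisj fC1 fC2 _ hC2T ?_)
    intro a ha h
    exact (Finset.mem_sdiff.mp ha).2 h
  · have hbb2 : b₂ = !b₁ := by cases b₁ <;> cases b₂ <;> revert hbb <;> decide
    rw [hbb2] at hC2
    exact drift ((Finset.univ.image fC2 \ Finset.univ.image fC1).card) b₁ fC2 fC1 hC2 hC1 le_rfl
end
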